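/- arXiv:2303.17153 — 7 statements merged into one kernel-verified Lean document; each statement's English description precedes it below -/
import Mathlib

section
/- Let (X,ρ) be a complete metric space, c ∈ (0,1), and f_j : X → X (j ≥ 1) a sequence of maps with ρ(f_j(x), f_j(y)) ≤ c·ρ(x,y) for all j, x, y; let z_j be the unique fixed point of f_j. Suppose there exists x ∈ X with Σ_{j≥1} c^j·ρ(x, z_j) < ∞. Then for every m ≥ 1 there exists x_m ∈ X such that for every y ∈ X and every n ≥ 0, ρ(f_{[m,m+n]}(y), x_m) ≤ (1+c)·c^{−m}·Σ_{k=m+n+1}^{∞} c^k·ρ(y, z_k). In particular, for each m and each y ∈ X the sequence n ↦ f_{[m,m+n]}(y) converges to x_m, and the limit x_m does not depend on y. -/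
/-- `iterComp f m n = f_{[m, m+n]} = f_m ∘ f_{m+1} ∘ ⋯ ∘ f_{m+n}`. -/
def iterComp {X : Type*} (f : ℕ → X → X) : ℕ → ℕ → X → X
  | m, 0, y => f m y
  | m, n + 1, y => f m (iterComp f (m + 1) n y)

lemma iterComp_succ_right {X : Type*} (f : ℕ → X → X) (m n : ℕ) (y : X) :
    iterComp f m (n + 1) y = iterComp f m n (f (m + n + 1) y) := by
  induction n generalizing m with
  | zero => simp [iterComp]
  | succ n ih =>
    show f m (iterComp f (m + 1) (n + 1) y) = _
    rw [ih]
    have : m + 1 + n + 1 = m + (n + 1) + 1 := by omega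
    rw [this]
    rfl

lemma iterComp_dist {X : Type*} [MetricSpace X] (c : ℝ) (hc0 : 0 ≤ c)
    (f : ℕ → X → X)
    (hf : ∀ j, 1 ≤ j → ∀ u v : X, dist (f j u) (f j v) ≤ c * dist u v)
    (m : ℕ) (hm : 1 ≤ m) (n : ℕ) (u v : X) :
    dist (iterComp f m n u) (iterComp f m n v) ≤ c ^ (n + 1) * dist u v := by
  induction n generalizing m with
  | zero => simpa [iterComp] using hf m hm u v
  | succ n ih =>
    calc dist (iterComp f m (n + 1) u) (iterComp f m (n + 1) v)
        = dist (f m (iterComp f (m + 1) n u)) (f m (iterComp f (m + 1) n v)) := rfl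
      _ ≤ c * dist (iterComp f (m + 1) n u) (iterComp f (m + 1) n v) := hf m hm _ _
      _ ≤ c * (c ^ (n + 1) * dist u v) :=
          mul_le_mul_of_nonneg_left (ih (m + 1) (by omega)) hc0
      _ = c ^ (n + 1 + 1) * dist u v := by ring

/-- Under the summability condition `∑_{j≥1} c^j ρ(x, z j) < ∞`, for each
`m ≥ 1` there is `x_m` with
`ρ(f_{[m,m+n]}(y), x_m) ≤ (1+c)·c^{-m}·∑_{k=m+n+1}^∞ c^k ρ(y, z_k)` for all `y, n`;
in particular `f_{[m,m+n]}(y) → x_m` for every `y`. -/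
theorem stmt1 {X : Type*} [MetricSpace X] [CompleteSpace X]
    (c : ℝ) (hc0 : 0 < c) (hc1 : c < 1)
    (f : ℕ → X → X) (z : ℕ → X)
    (hf : ∀ j, 1 ≤ j → ∀ u v : X, dist (f j u) (f j v) ≤ c * dist u v)
    (hz : ∀ j, 1 ≤ j → f j (z j) = z j)
    (x : X) (hx : Summable fun j : ℕ => c ^ (j + 1) * dist x (z (j + 1))) :
    ∀ m : ℕ, 1 ≤ m → ∃ xm : X,
      (∀ (y : X) (n : ℕ),
        dist (iterComp f m n y) xm ≤
          (1 + c) * c⁻¹ ^ m *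
            ∑' k : ℕ, c ^ (m + n + 1 + k) * dist y (z (m + n + 1 + k))) ∧
      (∀ y : X, Filter.Tendsto (fun n => iterComp f m n y) Filter.atTop (nhds xm)) := by
  intro m hm
  have hc0' : (0:ℝ) ≤ c := le_of_lt hc0
  -- summability of the basic series for each y
  have hsum : ∀ y : X, Summable (fun n : ℕ => c ^ (n + 1) * dist y (z (m + n + 1))) := by
    intro y
    have h1 : Summable (fun n : ℕ => c ^ (n + 1) * dist y x) := by
      have := (summable_geometric_of_lt_one hc0' hc1).mul_left c
      simpa [pow_succ, mul_comm, mul_assoc] using this.mul_right (dist y x)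
    have h2 : Summable (fun n : ℕ => c ^ (n + 1) * dist x (z (m + n + 1))) := by
      have hshift : Summable (fun n : ℕ => c ^ (n + m + 1) * dist x (z (n + m + 1))) :=
        (summable_nat_add_iff m).2 hx
      have : Summable (fun n : ℕ => c⁻¹ ^ m * (c ^ (n + m + 1) * dist x (z (n + m + 1)))) :=
        hshift.mul_left _
      apply this.congr
      intro n
      have hne : c ≠ 0 := ne_of_gt hc0
      have h2 : m + n + 1 = n + m + 1 := by omega
      rw [h2, ← mul_assoc, inv_pow]
      congr 1
      field_simp
      ring
    apply Summable.of_nonneg_of_le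
    · intro n; positivity
    · intro n
      calc c ^ (n + 1) * dist y (z (m + n + 1))
          ≤ c ^ (n + 1) * (dist y x + dist x (z (m + n + 1))) := by
            apply mul_le_mul_of_nonneg_left (dist_triangle _ _ _) (by positivity)
        _ = c ^ (n + 1) * dist y x + c ^ (n + 1) * dist x (z (m + n + 1)) := by ring
    · exact h1.add h2
  -- step estimate
  have hstep : ∀ (y : X) (n : ℕ),
      dist (iterComp f m n y) (iterComp f m (n + 1) y) ≤
        (1 + c) * (c ^ (n + 1) * dist y (z (m + n + 1))) := by
    intro y n
    rw [iterComp_succ_right]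
    have h1 : dist (iterComp f m n y) (iterComp f m n (f (m + n + 1) y)) ≤
        c ^ (n + 1) * dist y (f (m + n + 1) y) :=
      iterComp_dist c hc0' f hf m hm n _ _
    have h2 : dist y (f (m + n + 1) y) ≤ (1 + c) * dist y (z (m + n + 1)) := by
      have hj : 1 ≤ m + n + 1 := by omega
      calc dist y (f (m + n + 1) y)
          ≤ dist y (z (m + n + 1)) + dist (z (m + n + 1)) (f (m + n + 1) y) :=
            dist_triangle _ _ _
        _ = dist y (z (m + n + 1)) + dist (f (m + n + 1) (z (m + n + 1))) (f (m + n + 1) y) := by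
            rw [hz _ hj]
        _ ≤ dist y (z (m + n + 1)) + c * dist (z (m + n + 1)) y := by
            have := hf (m + n + 1) hj (z (m + n + 1)) y
            linarith
        _ = (1 + c) * dist y (z (m + n + 1)) := by rw [dist_comm (z (m + n + 1)) y]; ring
    calc dist (iterComp f m n y) (iterComp f m n (f (m + n + 1) y))
        ≤ c ^ (n + 1) * dist y (f (m + n + 1) y) := h1
      _ ≤ c ^ (n + 1) * ((1 + c) * dist y (z (m + n + 1))) := by
          apply mul_le_mul_of_nonneg_left h2 (by positivity)
      _ = (1 + c) * (c ^ (n + 1) * dist y (z (m + n + 1))) := by ring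
  have hd : ∀ y : X, Summable (fun n : ℕ => (1 + c) * (c ^ (n + 1) * dist y (z (m + n + 1)))) :=
    fun y => (hsum y).mul_left _
  -- Cauchy for y = x, get xm
  have hcauchy : CauchySeq (fun n => iterComp f m n x) :=
    cauchySeq_of_dist_le_of_summable _ (hstep x) (hd x)
  obtain ⟨xm, hxm⟩ := cauchySeq_tendsto_of_complete hcauchy
  refine ⟨xm, ?_, ?_⟩
  · -- distance bound
    intro y n
    have hty : Filter.Tendsto (fun n => iterComp f m n y) Filter.atTop (nhds xm) := by
      apply hxm.congr_dist
      have hb : ∀ n : ℕ, dist (iterComp f m n x) (iterComp f m n y) ≤ c ^ (n + 1) * dist x y :=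
        fun n => iterComp_dist c hc0' f hf m hm n x y
      have hlim : Filter.Tendsto (fun n : ℕ => c ^ (n + 1) * dist x y) Filter.atTop (nhds 0) := by
        have : Filter.Tendsto (fun n : ℕ => c ^ (n + 1)) Filter.atTop (nhds 0) :=
          (tendsto_pow_atTop_nhds_zero_of_lt_one hc0' hc1).comp (Filter.tendsto_add_atTop_nat 1)
        simpa using this.mul_const (dist x y)
      exact squeeze_zero (fun n => dist_nonneg) hb hlim
    have hmain := dist_le_tsum_of_dist_le_of_tendsto _ (hstep y) (hd y) hty n
    refine hmain.trans_eq ?_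
    rw [tsum_mul_left, mul_assoc]
    congr 1
    rw [← tsum_mul_left]
    apply tsum_congr
    intro k
    have hne : c ≠ 0 := ne_of_gt hc0
    have h1 : c⁻¹ ^ m * c ^ (m + n + 1 + k) = c ^ (n + k + 1) := by
      rw [inv_pow]; field_simp; ring
    have h2 : m + n + 1 + k = m + (n + k) + 1 := by omega
    rw [← mul_assoc, h1, h2]
  · -- tendsto for every y
    intro y
    apply hxm.congr_dist
    have hb : ∀ n : ℕ, dist (iterComp f m n x) (iterComp f m n y) ≤ c ^ (n + 1) * dist x y :=
      fun n => iterComp_dist c hc0' f hf m hm n x y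
    have hlim : Filter.Tendsto (fun n : ℕ => c ^ (n + 1) * dist x y) Filter.atTop (nhds 0) := by
      have : Filter.Tendsto (fun n : ℕ => c ^ (n + 1)) Filter.atTop (nhds 0) :=
        (tendsto_pow_atTop_nhds_zero_of_lt_one hc0' hc1).comp (Filter.tendsto_add_atTop_nat 1)
      simpa using this.mul_const (dist x y)
    exact squeeze_zero (fun n => dist_nonneg) hb hlim
end

section
/- Let (X,ρ) be a complete metric space, c ∈ (0,1), and f_j : X → X (j ≥ 1) a sequence of maps with ρ(f_j(x), f_j(y)) ≤ c·ρ(x,y) for all j, x, y; let z_j be the unique fixed point of f_j. Suppose there exists x ∈ X with Σ_{j≥1} c^j·ρ(x, z_j) < ∞. Then there exists exactly one sequence {x_m}_{m≥1} in X with the following two properties: (i) f_m(x_{m+1}) = x_m for every m ≥ 1 (recursive compatibility), and (ii) there exists C > 0 such that ρ(y, x_m) ≤ C·c^{−m}·Σ_{k=m}^{∞} c^k·ρ(y, z_k) for every y ∈ X and every m ≥ 1. Moreover property (ii) holds with C = 1 + c. -/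
open Filter Topology

/-- `fcomp f m k = f m ∘ f (m+1) ∘ ⋯ ∘ f (m+k)`. -/
def fcomp {X : Type*} (f : ℕ → X → X) : ℕ → ℕ → X → X
  | m, 0 => f m
  | m, k+1 => fun u => f m (fcomp f (m+1) k u)

section Aux
variable {X : Type*} [MetricSpace X] {c : ℝ} {f : ℕ → X → X} {z : ℕ → X}

lemma fcomp_lipschitz (hc0 : 0 < c)
    (hf : ∀ j, 1 ≤ j → ∀ u v : X, dist (f j u) (f j v) ≤ c * dist u v) :
    ∀ (k m : ℕ), 1 ≤ m → ∀ u v : X,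
      dist (fcomp f m k u) (fcomp f m k v) ≤ c ^ (k+1) * dist u v := by
  intro k
  induction k with
  | zero => intro m hm u v; simpa [fcomp] using hf m hm u v
  | succ k ih =>
    intro m hm u v
    have h1 := hf m hm (fcomp f (m+1) k u) (fcomp f (m+1) k v)
    have h2 := ih (m+1) (by omega) u v
    calc dist (fcomp f m (k+1) u) (fcomp f m (k+1) v)
        ≤ c * dist (fcomp f (m+1) k u) (fcomp f (m+1) k v) := h1
      _ ≤ c * (c ^ (k+1) * dist u v) := by
          exact mul_le_mul_of_nonneg_left h2 hc0.le
      _ = c ^ (k+1+1) * dist u v := by ring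

omit [MetricSpace X] in
lemma fcomp_succ_right : ∀ (k m : ℕ) (u : X),
    fcomp f m (k+1) u = fcomp f m k (f (m+k+1) u) := by
  intro k
  induction k with
  | zero => intro m u; rfl
  | succ k ih =>
    intro m u
    show f m (fcomp f (m+1) (k+1) u) = f m (fcomp f (m+1) k (f (m+k+2) u))
    have h : m+1+k+1 = m+k+2 := by omega
    rw [ih (m+1) u, h]

lemma summable_shift {T : ℕ → ℝ} (hT : Summable T) (m : ℕ) :
    Summable (fun k => T (m + k)) :=
  ((summable_nat_add_iff m).mpr hT).congr (fun k => by rw [add_comm])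

lemma summable_T (hc0 : 0 < c) (hc1 : c < 1) (x : X)
    (hx : Summable fun j : ℕ => c ^ (j + 1) * dist x (z (j + 1))) (y : X) :
    Summable (fun j : ℕ => c ^ j * dist y (z j)) := by
  have hx' : Summable (fun j : ℕ => c ^ j * dist x (z j)) :=
    (summable_nat_add_iff 1).mp hx
  have hgeo : Summable (fun j : ℕ => c ^ j * dist y x) :=
    (summable_geometric_of_lt_one hc0.le hc1).mul_right _
  refine Summable.of_nonneg_of_le (fun j => by positivity) (fun j => ?_) (hgeo.add hx')
  have := dist_triangle y x (z j)
  calc c ^ j * dist y (z j) ≤ c ^ j * (dist y x + dist x (z j)) := by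
        exact mul_le_mul_of_nonneg_left this (by positivity)
    _ = c ^ j * dist y x + c ^ j * dist x (z j) := by ring

lemma summable_step0 (hc0 : 0 < c) {y : X}
    (hsum : Summable (fun j : ℕ => c ^ j * dist y (z j))) (m : ℕ) :
    Summable (fun k : ℕ => c ^ k * dist y (z (m + k))) := by
  have h := (summable_shift hsum m).mul_left ((c ^ m)⁻¹)
  refine h.congr fun k => ?_
  have hne : (c : ℝ) ^ m ≠ 0 := pow_ne_zero _ hc0.ne'
  rw [pow_add]
  field_simp

lemma summable_step1 (hc0 : 0 < c) {y : X}
    (hsum : Summable (fun j : ℕ => c ^ j * dist y (z j))) (m : ℕ) :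
    Summable (fun k : ℕ => c ^ (k+1) * dist y (z (m + k + 1))) := by
  have h := (summable_step0 hc0 hsum (m+1)).mul_left c
  refine h.congr fun k => ?_
  have e : m+1+k = m+k+1 := by omega
  rw [e, pow_succ]
  ring

end Aux

/-- Under the summability condition there is exactly one sequence
`{x_m}_{m≥1}` which is recursively compatible (`f_m(x_{m+1}) = x_m`) and satisfies
`ρ(y, x_m) ≤ C·c^{-m}·∑_{k=m}^∞ c^k ρ(y, z_k)` for some `C > 0`; moreover this holds
with `C = 1 + c`. -/
theorem stmt2 {X : Type*} [MetricSpace X] [CompleteSpace X]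
    (c : ℝ) (hc0 : 0 < c) (hc1 : c < 1)
    (f : ℕ → X → X) (z : ℕ → X)
    (hf : ∀ j, 1 ≤ j → ∀ u v : X, dist (f j u) (f j v) ≤ c * dist u v)
    (hz : ∀ j, 1 ≤ j → f j (z j) = z j)
    (x : X) (hx : Summable fun j : ℕ => c ^ (j + 1) * dist x (z (j + 1))) :
    ∃ xs : ℕ → X,
      (∀ m, 1 ≤ m → f m (xs (m + 1)) = xs m) ∧
      (∀ (y : X) (m : ℕ), 1 ≤ m →
        dist y (xs m) ≤ (1 + c) * c⁻¹ ^ m * ∑' k : ℕ, c ^ (m + k) * dist y (z (m + k))) ∧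
      (∀ xs' : ℕ → X,
        (∀ m, 1 ≤ m → f m (xs' (m + 1)) = xs' m) →
        (∃ C > (0 : ℝ), ∀ (y : X) (m : ℕ), 1 ≤ m →
          dist y (xs' m) ≤ C * c⁻¹ ^ m * ∑' k : ℕ, c ^ (m + k) * dist y (z (m + k))) →
        ∀ m, 1 ≤ m → xs' m = xs m) := by
  classical
  have hTsum : ∀ y : X, Summable (fun j : ℕ => c ^ j * dist y (z j)) :=
    summable_T hc0 hc1 x hx
  -- one-step estimate: dist y (f j y) ≤ (1+c) * dist y (z j)
  have hone : ∀ (y : X) (j : ℕ), 1 ≤ j → dist y (f j y) ≤ (1 + c) * dist y (z j) := by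
    intro y j hj
    have h1 : dist y (f j y) ≤ dist y (z j) + dist (z j) (f j y) := dist_triangle _ _ _
    have h2 : dist (z j) (f j y) ≤ c * dist y (z j) := by
      calc dist (z j) (f j y) = dist (f j (z j)) (f j y) := by rw [hz j hj]
        _ ≤ c * dist (z j) y := hf j hj _ _
        _ = c * dist y (z j) := by rw [dist_comm]
    linarith
  -- consecutive distances
  have hcons : ∀ (y : X) (m : ℕ), 1 ≤ m → ∀ k : ℕ,
      dist (fcomp f m k y) (fcomp f m (k+1) y)
        ≤ (1 + c) * (c ^ (k+1) * dist y (z (m+k+1))) := by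
    intro y m hm k
    rw [fcomp_succ_right]
    calc dist (fcomp f m k y) (fcomp f m k (f (m+k+1) y))
        ≤ c ^ (k+1) * dist y (f (m+k+1) y) := fcomp_lipschitz hc0 hf k m hm _ _
      _ ≤ c ^ (k+1) * ((1 + c) * dist y (z (m+k+1))) :=
          mul_le_mul_of_nonneg_left (hone y _ (by omega)) (by positivity)
      _ = (1 + c) * (c ^ (k+1) * dist y (z (m+k+1))) := by ring
  have hdsum : ∀ (y : X) (m : ℕ),
      Summable (fun k : ℕ => (1 + c) * (c ^ (k+1) * dist y (z (m+k+1)))) :=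
    fun y m => (summable_step1 hc0 (hTsum y) m).mul_left _
  have hcauchy : ∀ (y : X) (m : ℕ), 1 ≤ m → CauchySeq (fun k => fcomp f m k y) :=
    fun y m hm => cauchySeq_of_dist_le_of_summable _ (hcons y m hm) (hdsum y m)
  set xs : ℕ → X := fun m =>
    if h : 1 ≤ m then (cauchySeq_tendsto_of_complete (hcauchy x m h)).choose else x with hxsdef
  have htend : ∀ m, 1 ≤ m → Tendsto (fun k => fcomp f m k x) atTop (𝓝 (xs m)) := by
    intro m hm
    have : xs m = (cauchySeq_tendsto_of_complete (hcauchy x m hm)).choose := by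
      rw [hxsdef]; simp [hm]
    rw [this]
    exact (cauchySeq_tendsto_of_complete (hcauchy x m hm)).choose_spec
  -- for arbitrary starting point
  have htendy : ∀ (y : X) (m : ℕ), 1 ≤ m →
      Tendsto (fun k => fcomp f m k y) atTop (𝓝 (xs m)) := by
    intro y m hm
    refine (htend m hm).congr_dist ?_
    refine squeeze_zero (fun k => dist_nonneg) (fun k => fcomp_lipschitz hc0 hf k m hm x y) ?_
    have h1 : Tendsto (fun k : ℕ => c ^ (k+1)) atTop (𝓝 0) := by
      have := tendsto_pow_atTop_nhds_zero_of_lt_one hc0.le hc1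
      exact this.comp (tendsto_add_atTop_nat 1)
    simpa using h1.mul_const (dist x y)
  -- compatibility
  have hcompat : ∀ m, 1 ≤ m → f m (xs (m + 1)) = xs m := by
    intro m hm
    have hcont : Continuous (f m) :=
      LipschitzWith.continuous (K := ⟨c, hc0.le⟩)
        (LipschitzWith.of_dist_le_mul (fun u v => hf m hm u v))
    have h1 : Tendsto (fun k => f m (fcomp f (m+1) k x)) atTop (𝓝 (f m (xs (m+1)))) :=
      (hcont.tendsto _).comp (htendy x (m+1) (by omega))
    have h2 : Tendsto (fun k => fcomp f m (k+1) x) atTop (𝓝 (xs m)) :=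
      (htend m hm).comp (tendsto_add_atTop_nat 1)
    have h3 : (fun k => fcomp f m (k+1) x) = fun k => f m (fcomp f (m+1) k x) := rfl
    rw [h3] at h2
    exact tendsto_nhds_unique h1 h2
  -- key distance estimate (split form)
  have hkey : ∀ (y : X) (m : ℕ), 1 ≤ m →
      dist y (xs m) ≤ (1 + c) * dist y (z m)
        + ∑' k : ℕ, (1 + c) * (c ^ (k+1) * dist y (z (m+k+1))) := by
    intro y m hm
    have h0 : dist (fcomp f m 0 y) (xs m)
        ≤ ∑' k : ℕ, (1 + c) * (c ^ (k+1) * dist y (z (m+k+1))) :=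
      dist_le_tsum_of_dist_le_of_tendsto₀ _ (hcons y m hm) (hdsum y m) (htendy y m hm)
    have h0' : dist (f m y) (xs m)
        ≤ ∑' k : ℕ, (1 + c) * (c ^ (k+1) * dist y (z (m+k+1))) := h0
    calc dist y (xs m) ≤ dist y (f m y) + dist (f m y) (xs m) := dist_triangle _ _ _
      _ ≤ (1 + c) * dist y (z m)
          + ∑' k : ℕ, (1 + c) * (c ^ (k+1) * dist y (z (m+k+1))) :=
        add_le_add (hone y m hm) h0'
  -- rewrite the RHS of the official bound into split form
  have hconv : ∀ (y : X) (m : ℕ),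
      (1 + c) * c⁻¹ ^ m * ∑' k : ℕ, c ^ (m + k) * dist y (z (m + k))
        = (1 + c) * dist y (z m)
          + ∑' k : ℕ, (1 + c) * (c ^ (k+1) * dist y (z (m+k+1))) := by
    intro y m
    have hs0 : Summable (fun k : ℕ => c ^ k * dist y (z (m + k))) :=
      summable_step0 hc0 (hTsum y) m
    have e1 : (∑' k : ℕ, c ^ (m + k) * dist y (z (m + k)))
        = c ^ m * ∑' k : ℕ, c ^ k * dist y (z (m + k)) := by
      rw [← tsum_mul_left]
      exact tsum_congr fun k => by rw [pow_add]; ring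
    have e2 : (∑' k : ℕ, c ^ k * dist y (z (m + k)))
        = dist y (z m) + ∑' k : ℕ, c ^ (k+1) * dist y (z (m+k+1)) := by
      rw [Summable.tsum_eq_zero_add hs0]
      simp only [pow_zero, one_mul, Nat.add_zero]
      congr 1
    have e3 : (∑' k : ℕ, (1 + c) * (c ^ (k+1) * dist y (z (m+k+1))))
        = (1 + c) * ∑' k : ℕ, c ^ (k+1) * dist y (z (m+k+1)) := tsum_mul_left
    have hcm : c⁻¹ ^ m * c ^ m = 1 := by
      rw [← mul_pow, inv_mul_cancel₀ hc0.ne', one_pow]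
    rw [e1, e2, e3]
    calc (1 + c) * c⁻¹ ^ m
          * (c ^ m * (dist y (z m) + ∑' k : ℕ, c ^ (k+1) * dist y (z (m+k+1))))
        = (c⁻¹ ^ m * c ^ m)
          * ((1 + c) * (dist y (z m) + ∑' k : ℕ, c ^ (k+1) * dist y (z (m+k+1)))) := by ring
      _ = (1 + c) * dist y (z m)
          + (1 + c) * ∑' k : ℕ, c ^ (k+1) * dist y (z (m+k+1)) := by rw [hcm]; ring
  have hbound : ∀ (y : X) (m : ℕ), 1 ≤ m →
      dist y (xs m) ≤ (1 + c) * c⁻¹ ^ m * ∑' k : ℕ, c ^ (m + k) * dist y (z (m + k)) := by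
    intro y m hm
    rw [hconv y m]
    exact hkey y m hm
  refine ⟨xs, hcompat, hbound, ?_⟩
  -- uniqueness
  rintro xs' hcomp' ⟨C, hC0, hbd'⟩ m hm
  have hfix : ∀ (w : ℕ → X), (∀ m, 1 ≤ m → f m (w (m+1)) = w m) →
      ∀ (k m : ℕ), 1 ≤ m → w m = fcomp f m k (w (m+k+1)) := by
    intro w hw k
    induction k with
    | zero => intro m hm; exact (hw m hm).symm
    | succ k ih =>
      intro m hm
      show w m = f m (fcomp f (m+1) k (w (m+k+2)))
      have h1 := ih (m+1) (by omega)
      have e : m+1+k+1 = m+k+2 := by omega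
      rw [e] at h1
      rw [← hw m hm, h1]
  have hS0 : Tendsto (fun n : ℕ => ∑' j : ℕ, c ^ (n + j) * dist x (z (n + j)))
      atTop (𝓝 0) := by
    have hg := tendsto_sum_nat_add (fun i : ℕ => c ^ i * dist x (z i))
    exact hg.congr fun n => tsum_congr fun j => by rw [add_comm j n]
  have hdistbd : ∀ k : ℕ, dist (xs' m) (xs m)
      ≤ (C + (1+c)) * c⁻¹ ^ m
        * ∑' j : ℕ, c ^ ((m+k+1) + j) * dist x (z ((m+k+1) + j)) := by
    intro k
    have hn1 : 1 ≤ m + k + 1 := by omega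
    set Sn : ℝ := ∑' j : ℕ, c ^ ((m+k+1) + j) * dist x (z ((m+k+1) + j)) with hSn
    have h1 : dist (xs' m) (xs m) ≤ c ^ (k+1) * dist (xs' (m+k+1)) (xs (m+k+1)) := by
      rw [hfix xs' hcomp' k m hm, hfix xs hcompat k m hm]
      exact fcomp_lipschitz hc0 hf k m hm _ _
    have h2 : dist (xs' (m+k+1)) x ≤ C * c⁻¹ ^ (m+k+1) * Sn := by
      rw [dist_comm]; exact hbd' x (m+k+1) hn1
    have h3 : dist x (xs (m+k+1)) ≤ (1+c) * c⁻¹ ^ (m+k+1) * Sn := hbound x (m+k+1) hn1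
    have h4 : dist (xs' (m+k+1)) (xs (m+k+1)) ≤ (C + (1+c)) * c⁻¹ ^ (m+k+1) * Sn := by
      have ht := dist_triangle (xs' (m+k+1)) x (xs (m+k+1))
      have hexp : (C + (1+c)) * c⁻¹ ^ (m+k+1) * Sn
          = C * c⁻¹ ^ (m+k+1) * Sn + (1+c) * c⁻¹ ^ (m+k+1) * Sn := by ring
      linarith
    have hck : c ^ (k+1) * c⁻¹ ^ (k+1) = 1 := by
      rw [← mul_pow, mul_inv_cancel₀ hc0.ne', one_pow]
    have h5 : c ^ (k+1) * ((C + (1+c)) * c⁻¹ ^ (m+k+1) * Sn)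
        = (C + (1+c)) * c⁻¹ ^ m * Sn := by
      have e : c⁻¹ ^ (m+k+1) = c⁻¹ ^ m * c⁻¹ ^ (k+1) := pow_add c⁻¹ m (k+1)
      rw [e]
      calc c ^ (k+1) * ((C + (1+c)) * (c⁻¹ ^ m * c⁻¹ ^ (k+1)) * Sn)
          = (c ^ (k+1) * c⁻¹ ^ (k+1)) * ((C + (1+c)) * c⁻¹ ^ m * Sn) := by ring
        _ = (C + (1+c)) * c⁻¹ ^ m * Sn := by rw [hck, one_mul]
    calc dist (xs' m) (xs m) ≤ c ^ (k+1) * dist (xs' (m+k+1)) (xs (m+k+1)) := h1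
      _ ≤ c ^ (k+1) * ((C + (1+c)) * c⁻¹ ^ (m+k+1) * Sn) :=
          mul_le_mul_of_nonneg_left h4 (by positivity)
      _ = (C + (1+c)) * c⁻¹ ^ m * Sn := h5
  have hlim : Tendsto (fun k : ℕ => (C + (1+c)) * c⁻¹ ^ m
      * ∑' j : ℕ, c ^ ((m+k+1) + j) * dist x (z ((m+k+1) + j))) atTop (𝓝 0) := by
    have hcmp : Tendsto (fun k : ℕ => m+k+1) atTop atTop :=
      (tendsto_add_atTop_nat (m+1)).congr fun k => by omega
    have h := hS0.comp hcmp
    have h2 := h.const_mul ((C + (1+c)) * c⁻¹ ^ m)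
    simpa [Function.comp] using h2
  have hle : dist (xs' m) (xs m) ≤ 0 := ge_of_tendsto' hlim hdistbd
  exact dist_le_zero.mp hle
end

section
/- Let (X,ρ) be a complete metric space, c ∈ (0,1), and f_j : X → X (j ≥ 1) a sequence of maps with ρ(f_j(x), f_j(y)) ≤ c·ρ(x,y) for all j, x, y; let z_j be the unique fixed point of f_j. Suppose there exists x ∈ X with a := limsup_{j→∞} ρ(x, z_j)^{1/j} < 1/c. Then for every r with c ≤ r < 1 and a·c < r and for every m ≥ 1 there exists x_m ∈ X such that for all y ∈ X the sequence n ↦ f_{[m,m+n]}(y) converges to x_m exponentially fast with rate r (i.e. there is a constant C(m,y) with ρ(f_{[m,m+n]}(y), x_m) ≤ C(m,y)·r^n for all n ≥ 0); moreover (i) f_m(x_{m+1}) = x_m for all m, (ii) for each y ∈ X the quantity (c/r)^m·ρ(y, x_m) is bounded in m, and {x_m} is the unique sequence with properties (i) and (ii). -/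
open Filter Topology

lemma iterComp_succ' {X : Type*} (f : ℕ → X → X) :
    ∀ (m n : ℕ) (y : X), iterComp f m (n + 1) y = iterComp f m n (f (m + n + 1) y) := by
  intro m n
  induction n generalizing m with
  | zero => intro y; simp [iterComp]
  | succ n ih =>
    intro y
    show f m (iterComp f (m + 1) (n + 1) y) = iterComp f m (n + 1) (f (m + (n + 1) + 1) y)
    rw [ih (m + 1) y]
    show iterComp f m (n + 1) (f (m + 1 + n + 1) y) = _
    congr 2
    omega

lemma iterComp_lip {X : Type*} [MetricSpace X] {c : ℝ} (hc0 : 0 < c)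
    {f : ℕ → X → X}
    (hf : ∀ j, 1 ≤ j → ∀ u v : X, dist (f j u) (f j v) ≤ c * dist u v) :
    ∀ (n m : ℕ), 1 ≤ m → ∀ u v : X,
      dist (iterComp f m n u) (iterComp f m n v) ≤ c ^ (n + 1) * dist u v := by
  intro n
  induction n with
  | zero => intro m hm u v; simpa [iterComp] using hf m hm u v
  | succ n ih =>
    intro m hm u v
    calc dist (f m (iterComp f (m + 1) n u)) (f m (iterComp f (m + 1) n v))
        ≤ c * dist (iterComp f (m + 1) n u) (iterComp f (m + 1) n v) :=
          hf m hm _ _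
      _ ≤ c * (c ^ (n + 1) * dist u v) := by
          exact mul_le_mul_of_nonneg_left (ih (m + 1) (by omega) u v) hc0.le
      _ = c ^ (n + 1 + 1) * dist u v := by ring

/-- If `a := limsup_j ρ(x, z_j)^{1/j} < 1/c`, then for every rate
`r ∈ [c, 1)` with `a·c < r` there is a unique sequence `{x_m}` which is recursively
compatible and has `(c/r)^m ρ(y, x_m)` bounded in `m` for each `y`; moreover, for each
`m ≥ 1` and `y`, `f_{[m,m+n]}(y) → x_m` exponentially fast with rate `r`. -/
theorem stmt5 {X : Type*} [MetricSpace X] [CompleteSpace X]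
    (c : ℝ) (hc0 : 0 < c) (hc1 : c < 1)
    (f : ℕ → X → X) (z : ℕ → X)
    (hf : ∀ j, 1 ≤ j → ∀ u v : X, dist (f j u) (f j v) ≤ c * dist u v)
    (hz : ∀ j, 1 ≤ j → f j (z j) = z j)
    (x : X)
    (ha : Filter.limsup
        (fun j : ℕ => (ENNReal.ofReal (dist x (z j))) ^ (1 / (j : ℝ))) Filter.atTop
      < ENNReal.ofReal (1 / c)) :
    ∀ r : ℝ, c ≤ r → r < 1 →
      (Filter.limsup
          (fun j : ℕ => (ENNReal.ofReal (dist x (z j))) ^ (1 / (j : ℝ))) Filter.atTop)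
          * ENNReal.ofReal c < ENNReal.ofReal r →
      ∃ xs : ℕ → X,
        (∀ m, 1 ≤ m → ∀ y : X, ∃ C > (0 : ℝ), ∀ n : ℕ,
          dist (iterComp f m n y) (xs m) ≤ C * r ^ n) ∧
        (∀ m, 1 ≤ m → f m (xs (m + 1)) = xs m) ∧
        (∀ y : X, ∃ B : ℝ, ∀ m, 1 ≤ m → (c / r) ^ m * dist y (xs m) ≤ B) ∧
        (∀ xs' : ℕ → X,
          (∀ m, 1 ≤ m → f m (xs' (m + 1)) = xs' m) →
          (∀ y : X, ∃ B : ℝ, ∀ m, 1 ≤ m → (c / r) ^ m * dist y (xs' m) ≤ B) →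
          ∀ m, 1 ≤ m → xs' m = xs m) := by
  intro r hcr hr1 hprod
  have hr0 : 0 < r := lt_of_lt_of_le hc0 hcr
  set a := Filter.limsup
      (fun j : ℕ => (ENNReal.ofReal (dist x (z j))) ^ (1 / (j : ℝ))) Filter.atTop with ha_def
  -- a is finite
  have hane : a ≠ ⊤ := by
    intro h
    rw [h] at hprod
    rw [ENNReal.top_mul (by simpa using hc0)] at hprod
    exact (not_top_lt hprod).elim
  -- choose q with a.toReal < q, c*q < r, 0 < q
  have hareal : a.toReal * c < r := by
    have : ENNReal.ofReal (a.toReal * c) < ENNReal.ofReal r := by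
      rw [ENNReal.ofReal_mul ENNReal.toReal_nonneg, ENNReal.ofReal_toReal hane]
      exact hprod
    exact (ENNReal.ofReal_lt_ofReal_iff_of_nonneg
      (mul_nonneg ENNReal.toReal_nonneg hc0.le)).mp this
  obtain ⟨q, hq0, haq, hcq⟩ : ∃ q : ℝ, 0 < q ∧ a.toReal < q ∧ c * q < r := by
    have harc : a.toReal < r / c := (lt_div_iff₀ hc0).mpr hareal
    refine ⟨(a.toReal + r / c) / 2, ?_, by linarith, ?_⟩
    · have := ENNReal.toReal_nonneg (a := a)
      have : 0 < r / c := by positivity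
      linarith [ENNReal.toReal_nonneg (a := a)]
    · have h2 : (a.toReal + r / c) / 2 < r / c := by linarith
      calc c * ((a.toReal + r / c) / 2) < c * (r / c) := mul_lt_mul_of_pos_left h2 hc0
        _ = r := by field_simp
  -- eventual bound
  have hev : ∀ᶠ j : ℕ in atTop,
      (ENNReal.ofReal (dist x (z j))) ^ (1 / (j : ℝ)) < ENNReal.ofReal q := by
    refine Filter.eventually_lt_of_limsup_lt ?_ (by isBoundedDefault)
    rw [← ha_def]
    calc a = ENNReal.ofReal a.toReal := (ENNReal.ofReal_toReal hane).symm
      _ < ENNReal.ofReal q := by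
          exact (ENNReal.ofReal_lt_ofReal_iff hq0).mpr haq
  obtain ⟨N, hN⟩ := Filter.eventually_atTop.mp hev
  -- pointwise bound dist x (z j) ≤ q ^ j for j ≥ max N 1
  have hptw : ∀ j, max N 1 ≤ j → dist x (z j) ≤ q ^ j := by
    intro j hj
    have hj1 : 1 ≤ j := le_trans (le_max_right N 1) hj
    have hjN : N ≤ j := le_trans (le_max_left N 1) hj
    have h := (hN j hjN).le
    have h2 := ENNReal.rpow_le_rpow h (by positivity : (0:ℝ) ≤ (j:ℝ))
    have hjne : (j : ℝ) ≠ 0 := by positivity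
    rw [← ENNReal.rpow_mul, one_div, inv_mul_cancel₀ hjne, ENNReal.rpow_one,
      ENNReal.rpow_natCast, ← ENNReal.ofReal_pow hq0.le] at h2
    exact (ENNReal.ofReal_le_ofReal_iff (by positivity)).mp h2
  -- global constant K
  obtain ⟨K, hK1, hKbound⟩ : ∃ K : ℝ, 1 ≤ K ∧ ∀ j : ℕ, dist x (z j) ≤ K * q ^ j := by
    have hsum : 0 ≤ ∑ j ∈ Finset.range (max N 1), dist x (z j) / q ^ j :=
      Finset.sum_nonneg fun j _ => div_nonneg dist_nonneg (by positivity)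
    refine ⟨1 + ∑ j ∈ Finset.range (max N 1), dist x (z j) / q ^ j, by linarith, ?_⟩
    intro j
    rcases le_or_gt (max N 1) j with h | h
    · calc dist x (z j) ≤ q ^ j := hptw j h
        _ ≤ _ := le_mul_of_one_le_left (by positivity) (by linarith)
    · have hle : dist x (z j) / q ^ j ≤ ∑ i ∈ Finset.range (max N 1), dist x (z i) / q ^ i :=
        Finset.single_le_sum (f := fun i => dist x (z i) / q ^ i)
          (fun i _ => div_nonneg dist_nonneg (by positivity)) (Finset.mem_range.mpr h)
      have h2 : dist x (z j) / q ^ j ≤ 1 + ∑ i ∈ Finset.range (max N 1), dist x (z i) / q ^ i := by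
        linarith
      calc dist x (z j) = (dist x (z j) / q ^ j) * q ^ j := by field_simp
        _ ≤ _ := mul_le_mul_of_nonneg_right h2 (by positivity)
  -- step estimate
  have hstep : ∀ j, 1 ≤ j → ∀ y : X, dist (f j y) y ≤ (1 + c) * (dist y x + K * q ^ j) := by
    intro j hj y
    have h1 : dist (f j y) y ≤ (1 + c) * dist y (z j) := by
      calc dist (f j y) y ≤ dist (f j y) (z j) + dist (z j) y := dist_triangle _ _ _
        _ = dist (f j y) (f j (z j)) + dist y (z j) := by rw [hz j hj, dist_comm (z j) y]
        _ ≤ c * dist y (z j) + dist y (z j) := by linarith [hf j hj y (z j)]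
        _ = (1 + c) * dist y (z j) := by ring
    have h2 : dist y (z j) ≤ dist y x + K * q ^ j :=
      le_trans (dist_triangle y x (z j)) (by linarith [hKbound j])
    calc dist (f j y) y ≤ (1 + c) * dist y (z j) := h1
      _ ≤ (1 + c) * (dist y x + K * q ^ j) :=
          mul_le_mul_of_nonneg_left h2 (by linarith)
  -- gap estimate
  have hgap : ∀ m, 1 ≤ m → ∀ (y : X) (n : ℕ),
      dist (iterComp f m n y) (iterComp f m (n + 1) y)
        ≤ ((1 + c) * (dist y x + K * q ^ m) * r) * r ^ n := by
    intro m hm y n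
    rw [dist_comm, iterComp_succ' f m n y]
    have hD : (0:ℝ) ≤ dist y x := dist_nonneg
    calc dist (iterComp f m n (f (m + n + 1) y)) (iterComp f m n y)
        ≤ c ^ (n + 1) * dist (f (m + n + 1) y) y := iterComp_lip hc0 hf n m hm _ _
      _ ≤ c ^ (n + 1) * ((1 + c) * (dist y x + K * q ^ (m + n + 1))) :=
          mul_le_mul_of_nonneg_left (hstep _ (by omega) y) (by positivity)
      _ = (1 + c) * (c ^ (n+1) * dist y x + (K * q ^ m) * (c * q) ^ (n+1)) := by
          rw [show m + n + 1 = m + (n + 1) from by omega, pow_add, mul_pow]; ring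
      _ ≤ (1 + c) * (r ^ (n+1) * dist y x + (K * q ^ m) * r ^ (n+1)) := by
          have h1 : c ^ (n+1) ≤ r ^ (n+1) := pow_le_pow_left₀ hc0.le hcr (n+1)
          have h2 : (c * q) ^ (n+1) ≤ r ^ (n+1) :=
            pow_le_pow_left₀ (by positivity) hcq.le (n+1)
          have hKq : (0:ℝ) ≤ K * q ^ m := by positivity
          nlinarith [mul_le_mul_of_nonneg_right h1 hD, mul_le_mul_of_nonneg_left h2 hKq]
      _ = ((1 + c) * (dist y x + K * q ^ m) * r) * r ^ n := by ring
  -- Cauchy sequences and limits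
  have hCS : ∀ m, 1 ≤ m → ∀ y : X, CauchySeq (fun n => iterComp f m n y) := fun m hm y =>
    cauchySeq_of_le_geometric r _ hr1 (hgap m hm y)
  have hlim : ∀ m, 1 ≤ m → ∃ p : X, Tendsto (fun n => iterComp f m n x) atTop (𝓝 p) :=
    fun m hm => cauchySeq_tendsto_of_complete (hCS m hm x)
  classical
  set xs : ℕ → X := fun m => if h : 1 ≤ m then (hlim m h).choose else x with hxs_def
  have hxs : ∀ m, (hm : 1 ≤ m) → Tendsto (fun n => iterComp f m n x) atTop (𝓝 (xs m)) := by
    intro m hm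
    rw [hxs_def]; simp only [dif_pos hm]; exact (hlim m hm).choose_spec
  have hxsy : ∀ m, 1 ≤ m → ∀ y : X, Tendsto (fun n => iterComp f m n y) atTop (𝓝 (xs m)) := by
    intro m hm y
    rw [tendsto_iff_dist_tendsto_zero]
    apply squeeze_zero (fun n => dist_nonneg)
      (g := fun n => c ^ (n+1) * dist y x + dist (iterComp f m n x) (xs m))
    · intro n
      have hl := iterComp_lip hc0 hf n m hm y x
      calc dist (iterComp f m n y) (xs m)
          ≤ dist (iterComp f m n y) (iterComp f m n x) + dist (iterComp f m n x) (xs m) :=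
            dist_triangle _ _ _
        _ ≤ c ^ (n+1) * dist y x + dist (iterComp f m n x) (xs m) := by linarith
    · have h1 : Tendsto (fun n : ℕ => c ^ (n+1) * dist y x) atTop (𝓝 0) := by
        have h0 := (tendsto_pow_atTop_nhds_zero_of_lt_one hc0.le hc1).mul_const
          (c * dist y x)
        simpa [pow_succ, mul_assoc, mul_comm, mul_left_comm] using h0
      have h2 : Tendsto (fun n => dist (iterComp f m n x) (xs m)) atTop (𝓝 0) :=
        tendsto_iff_dist_tendsto_zero.mp (hxs m hm)
      simpa using h1.add h2
  -- quantitative bound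
  have hquant : ∀ m, 1 ≤ m → ∀ (y : X) (n : ℕ),
      dist (iterComp f m n y) (xs m)
        ≤ ((1 + c) * (dist y x + K * q ^ m) * r / (1 - r)) * r ^ n := by
    intro m hm y n
    have h := dist_le_of_le_geometric_of_tendsto r _ hr1 (hgap m hm y) (hxsy m hm y) n
    calc dist (iterComp f m n y) (xs m)
        ≤ (1 + c) * (dist y x + K * q ^ m) * r * r ^ n / (1 - r) := h
      _ = ((1 + c) * (dist y x + K * q ^ m) * r / (1 - r)) * r ^ n := by ring
  -- distance from x to xs m
  have hdx : ∀ m, 1 ≤ m → dist x (xs m) ≤ ((1 + c) * K / (1 - r)) * q ^ m := by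
    intro m hm
    have h1 : dist (f m x) (xs m) ≤ (1 + c) * (K * q ^ m) * r / (1 - r) := by
      have h0 := hquant m hm x 0
      simpa [iterComp, dist_self] using h0
    have h2 : dist x (f m x) ≤ (1 + c) * (K * q ^ m) := by
      have h0 := hstep m hm x
      rw [dist_comm]
      simpa [dist_self] using h0
    have h3 := dist_triangle x (f m x) (xs m)
    have hr' : (0:ℝ) < 1 - r := by linarith
    have he : (1 + c) * (K * q ^ m) + (1 + c) * (K * q ^ m) * r / (1 - r)
        = ((1 + c) * K / (1 - r)) * q ^ m := by
      field_simp
      ring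
    linarith
  refine ⟨xs, ?_, ?_, ?_, ?_⟩
  · -- exponential convergence
    intro m hm y
    set C0 : ℝ := (1 + c) * (dist y x + K * q ^ m) * r / (1 - r) with hC0
    have hr' : (0:ℝ) < 1 - r := by linarith
    have hC0nn : 0 ≤ C0 := by
      rw [hC0]
      have hKq : (0:ℝ) ≤ K * q ^ m := by positivity
      have hD : (0:ℝ) ≤ dist y x := dist_nonneg
      positivity
    refine ⟨C0 + 1, by positivity, ?_⟩
    intro n
    have h := hquant m hm y n
    have h2 : C0 * r ^ n ≤ (C0 + 1) * r ^ n :=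
      mul_le_mul_of_nonneg_right (by linarith) (by positivity)
    rw [← hC0] at h
    linarith
  · -- compatibility
    intro m hm
    have hcont : Continuous (f m) := by
      have hl : LipschitzWith c.toNNReal (f m) := LipschitzWith.of_dist_le_mul (by
        intro u v
        simpa [Real.coe_toNNReal c hc0.le] using hf m hm u v)
      exact hl.continuous
    have h1 : Tendsto (fun n => f m (iterComp f (m+1) n x)) atTop (𝓝 (f m (xs (m+1)))) :=
      (hcont.tendsto _).comp (hxs (m+1) (by omega))
    have h3 : Tendsto (fun n => iterComp f m (n+1) x) atTop (𝓝 (xs m)) := by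
      have := (hxs m hm).comp (tendsto_add_atTop_nat 1)
      simpa [Function.comp_def] using this
    have h2 : Tendsto (fun n => f m (iterComp f (m+1) n x)) atTop (𝓝 (xs m)) := by
      simpa [iterComp] using h3
    exact tendsto_nhds_unique h1 h2
  · -- boundedness
    intro y
    refine ⟨dist y x + (1 + c) * K / (1 - r), ?_⟩
    intro m hm
    have hr' : (0:ℝ) < 1 - r := by linarith
    have hM : (0:ℝ) ≤ (1 + c) * K / (1 - r) := by
      apply div_nonneg (by nlinarith) (by linarith)
    have hd : (0:ℝ) ≤ dist y x := dist_nonneg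
    have hcr' : (c / r) ^ m ≤ 1 :=
      pow_le_one₀ (by positivity) ((div_le_one hr0).mpr hcr)
    have hqr : ((c / r) * q) ^ m ≤ 1 := by
      apply pow_le_one₀ (by positivity)
      rw [div_mul_eq_mul_div, div_le_one hr0]
      linarith [hcq]
    have h1 : dist y (xs m) ≤ dist y x + ((1 + c) * K / (1 - r)) * q ^ m :=
      le_trans (dist_triangle y x (xs m)) (by linarith [hdx m hm])
    calc (c / r) ^ m * dist y (xs m)
        ≤ (c / r) ^ m * (dist y x + ((1 + c) * K / (1 - r)) * q ^ m) :=
          mul_le_mul_of_nonneg_left h1 (by positivity)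
      _ = (c / r) ^ m * dist y x + ((1 + c) * K / (1 - r)) * ((c/r) * q) ^ m := by
          rw [mul_pow]; ring
      _ ≤ dist y x + (1 + c) * K / (1 - r) := by
          nlinarith [mul_le_mul_of_nonneg_right hcr' hd, mul_le_mul_of_nonneg_left hqr hM]
  · -- uniqueness
    intro xs' hi hii m hm
    obtain ⟨B, hB⟩ := hii x
    have hBnn : 0 ≤ B := le_trans (by positivity) (hB 1 le_rfl)
    have hrep : ∀ n, iterComp f m n (xs' (m + n + 1)) = xs' m := by
      intro n
      induction n with
      | zero => simpa [iterComp] using hi m hm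
      | succ n ih =>
        rw [iterComp_succ' f m n _]
        rw [show m + (n+1) + 1 = (m + n + 1) + 1 from by omega, hi (m+n+1) (by omega)]
        exact ih
    have hdist' : ∀ j, 1 ≤ j → dist x (xs' j) ≤ B * (r / c) ^ j := by
      intro j hj
      have hone : (c/r)^j * (r/c)^j = 1 := by
        have h0 : c/r * (r/c) = 1 := by field_simp
        rw [← mul_pow, h0, one_pow]
      calc dist x (xs' j) = ((c/r)^j * dist x (xs' j)) * (r/c)^j := by
            rw [mul_comm ((c/r)^j) _, mul_assoc, hone, mul_one]
        _ ≤ B * (r/c)^j := mul_le_mul_of_nonneg_right (hB j hj) (by positivity)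
    set Cx : ℝ := (1 + c) * (dist x x + K * q ^ m) * r / (1 - r) with hCx
    have hkey : ∀ n : ℕ, dist (xs' m) (xs m) ≤ (B * (r/c)^m * r + Cx) * r ^ n := by
      intro n
      have e1 : dist (xs' m) (iterComp f m n x)
          ≤ c ^ (n+1) * dist (xs' (m+n+1)) x := by
        calc dist (xs' m) (iterComp f m n x)
            = dist (iterComp f m n (xs' (m+n+1))) (iterComp f m n x) := by rw [hrep n]
          _ ≤ c ^ (n+1) * dist (xs' (m+n+1)) x := iterComp_lip hc0 hf n m hm _ _
      have e2 : c ^ (n+1) * dist (xs' (m+n+1)) x ≤ B * (r/c)^m * r * r^n := by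
        have h1 : dist (xs' (m+n+1)) x ≤ B * (r/c)^(m+n+1) := by
          rw [dist_comm]; exact hdist' (m+n+1) (by omega)
        have h2 : c ^ (n+1) * (B * (r/c)^(m+n+1)) = B * (r/c)^m * r * r^n := by
          rw [show m+n+1 = m+(n+1) from by omega, pow_add, div_pow, div_pow]
          field_simp
          ring
        calc c^(n+1) * dist (xs' (m+n+1)) x ≤ c^(n+1) * (B*(r/c)^(m+n+1)) :=
              mul_le_mul_of_nonneg_left h1 (by positivity)
          _ = B * (r/c)^m * r * r^n := h2
      have e3 := hquant m hm x n
      rw [← hCx] at e3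
      calc dist (xs' m) (xs m)
          ≤ dist (xs' m) (iterComp f m n x) + dist (iterComp f m n x) (xs m) :=
            dist_triangle _ _ _
        _ ≤ B*(r/c)^m*r*r^n + Cx * r^n := by linarith [e1.trans e2]
        _ = (B*(r/c)^m*r + Cx) * r^n := by ring
    have hlim0 : Tendsto (fun n : ℕ => (B*(r/c)^m*r + Cx) * r^n) atTop (𝓝 0) := by
      have h0 := (tendsto_pow_atTop_nhds_zero_of_lt_one hr0.le hr1).const_mul
        (B*(r/c)^m*r + Cx)
      simpa using h0
    have hle0 : dist (xs' m) (xs m) ≤ 0 := ge_of_tendsto' hlim0 hkey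
    exact dist_le_zero.mp hle0
end

section
/- For j ≥ 1 define f_j : ℝ → ℝ by f_j(x) = x/2 + 2^j (the affine contraction with contraction constant 1/2 and fixed point 2^{j+1}). Then for every m ≥ 1, every n ≥ 0 and every x ∈ ℝ, f_{[m,m+n]}(x) = x/2^{n+1} + 2^m·(n+1); consequently, for every m ≥ 1 and every x ∈ ℝ the sequence n ↦ f_{[m,m+n]}(x) tends to +∞, and in particular does not converge. -/
lemma stmt7_formula (x : ℝ) : ∀ n m : ℕ,
    iterComp (fun j (y : ℝ) => y / 2 + 2 ^ j) m n x
      = x / 2 ^ (n + 1) + 2 ^ m * (n + 1) := by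
  intro n
  induction n with
  | zero => intro m; simp [iterComp]
  | succ n ih =>
    intro m
    show (iterComp _ (m+1) n x) / 2 + 2 ^ m = _
    rw [ih (m + 1)]
    push_cast
    field_simp
    ring

/-- For `f_j(x) = x/2 + 2^j`, one has
`f_{[m,m+n]}(x) = x/2^{n+1} + 2^m·(n+1)`; hence the iterations tend to `+∞` and in
particular do not converge. -/
theorem stmt7 (m : ℕ) (hm : 1 ≤ m) (x : ℝ) :
    (∀ n : ℕ, iterComp (fun j (y : ℝ) => y / 2 + 2 ^ j) m n x
        = x / 2 ^ (n + 1) + 2 ^ m * (n + 1)) ∧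
    Filter.Tendsto (fun n : ℕ => iterComp (fun j (y : ℝ) => y / 2 + 2 ^ j) m n x)
      Filter.atTop Filter.atTop ∧
    ¬ ∃ L : ℝ, Filter.Tendsto (fun n : ℕ => iterComp (fun j (y : ℝ) => y / 2 + 2 ^ j) m n x)
      Filter.atTop (nhds L) := by
  have hform : ∀ n : ℕ, iterComp (fun j (y : ℝ) => y / 2 + 2 ^ j) m n x
      = x / 2 ^ (n + 1) + 2 ^ m * (n + 1) := fun n => stmt7_formula x n m
  have htend : Filter.Tendsto (fun n : ℕ => iterComp (fun j (y : ℝ) => y / 2 + 2 ^ j) m n x)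
      Filter.atTop Filter.atTop := by
    have h1 : Filter.Tendsto (fun n : ℕ => x / 2 ^ (n + 1) + 2 ^ m * ((n : ℝ) + 1))
        Filter.atTop Filter.atTop := by
      apply Filter.Tendsto.add_atTop
      · have : Filter.Tendsto (fun n : ℕ => x / 2 ^ (n + 1)) Filter.atTop (nhds 0) := by
          simpa [div_eq_mul_inv] using
            (tendsto_pow_atTop_nhds_zero_of_lt_one (by norm_num : (0:ℝ) ≤ 2⁻¹)
              (by norm_num : (2:ℝ)⁻¹ < 1)).comp (Filter.tendsto_add_atTop_nat 1)
              |>.const_mul x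
        exact this.comp Filter.tendsto_id |>.mono_left le_rfl
      · apply Filter.Tendsto.const_mul_atTop (by positivity : (0:ℝ) < 2 ^ m)
        exact Filter.tendsto_atTop_add_const_right _ 1 tendsto_natCast_atTop_atTop
    exact h1.congr (fun n => (hform n).symm)
  refine ⟨hform, htend, ?_⟩
  rintro ⟨L, hL⟩
  exact not_tendsto_nhds_of_tendsto_atTop htend L hL
end

section
/- Let c ∈ (0,1) and for j ≥ 1 define f_j : ℝ → ℝ by f_j(x) = c·x + (1−c)·j (the affine contraction with contraction constant c and fixed point j). Then for every m ≥ 1 and every y ∈ ℝ, the sequence n ↦ f_{[m,m+n]}(y) converges, as n → ∞, to m + c + c²/(1−c). In particular, the set of limit points {m + c + c²/(1−c) : m ≥ 1} is unbounded. -/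
lemma iterComp_formula (c : ℝ) (hc1 : c < 1) (y : ℝ) : ∀ n m : ℕ,
    iterComp (fun j (x : ℝ) => c * x + (1 - c) * j) m n y
      = ((m : ℝ) + c / (1 - c)) + c ^ (n + 1) * (y - ((m + n + 1 : ℕ) + c / (1 - c))) := by
  have h1 : (1 : ℝ) - c ≠ 0 := by linarith
  intro n
  induction n with
  | zero =>
      intro m
      simp only [iterComp]
      push_cast
      field_simp
      ring
  | succ n ih =>
      intro m
      simp only [iterComp, ih (m + 1)]
      push_cast
      field_simp
      ring

/-- For `f_j(x) = c·x + (1−c)·j` with `c ∈ (0,1)`, the iterations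
`f_{[m,m+n]}(y)` converge, as `n → ∞`, to `m + c + c²/(1−c)`; and the set of these limit
points (over `m ≥ 1`) is unbounded. -/
theorem stmt8 (c : ℝ) (hc0 : 0 < c) (hc1 : c < 1) :
    (∀ m : ℕ, 1 ≤ m → ∀ y : ℝ,
      Filter.Tendsto (fun n : ℕ => iterComp (fun j (x : ℝ) => c * x + (1 - c) * j) m n y)
        Filter.atTop (nhds ((m : ℝ) + c + c ^ 2 / (1 - c)))) ∧
    ¬ Bornology.IsBounded {L : ℝ | ∃ m : ℕ, 1 ≤ m ∧ L = (m : ℝ) + c + c ^ 2 / (1 - c)} := by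
  have h1 : (1 : ℝ) - c ≠ 0 := by linarith
  constructor
  · intro m hm y
    have hL : (m : ℝ) + c + c ^ 2 / (1 - c) = (m : ℝ) + c / (1 - c) := by
      field_simp; ring
    rw [hL]
    have key : ∀ n : ℕ,
        iterComp (fun j (x : ℝ) => c * x + (1 - c) * j) m n y
          = ((m : ℝ) + c / (1 - c))
            + (c ^ (n + 1) * (y - ((m : ℝ) + 1 + c / (1 - c))) - c * ((n : ℝ) * c ^ n)) := by
      intro n
      rw [iterComp_formula c hc1 y n m]
      push_cast
      ring
    simp only [key]
    have t1 : Filter.Tendsto (fun n : ℕ => c ^ (n + 1) * (y - ((m : ℝ) + 1 + c / (1 - c))))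
        Filter.atTop (nhds 0) := by
      have := (tendsto_pow_atTop_nhds_zero_of_lt_one hc0.le hc1).mul_const
        (y - ((m : ℝ) + 1 + c / (1 - c)))
      rw [zero_mul] at this
      exact this.comp (Filter.tendsto_add_atTop_nat 1)
    have t2 : Filter.Tendsto (fun n : ℕ => c * ((n : ℝ) * c ^ n)) Filter.atTop (nhds 0) := by
      have := (tendsto_self_mul_const_pow_of_lt_one hc0.le hc1).const_mul c
      rwa [mul_zero] at this
    have := Filter.Tendsto.const_add ((m : ℝ) + c / (1 - c)) (t1.sub t2)
    rwa [sub_zero, add_zero] at this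
  · intro hb
    obtain ⟨b, hbd⟩ := (Bornology.IsBounded.bddAbove hb)
    obtain ⟨m, hm⟩ := exists_nat_gt (b - c - c ^ 2 / (1 - c))
    have hmem : ((m + 1 : ℕ) : ℝ) + c + c ^ 2 / (1 - c) ∈
        {L : ℝ | ∃ m : ℕ, 1 ≤ m ∧ L = (m : ℝ) + c + c ^ 2 / (1 - c)} :=
      ⟨m + 1, Nat.le_add_left 1 m, rfl⟩
    have := hbd hmem
    push_cast at this
    linarith
end

section
/- Let ({f_i}_{i∈I}, T) be a general IFS with uniform contraction constant c ∈ (0,1) on a complete metric space (X,ρ), and let z_i be the unique fixed point of f_i. Suppose there exists x ∈ X with Σ_{n≥1} (max_{i∈I_n} ρ(x, z_i))·c^n < ∞. Then there exists a family {x_ω}_{ω∈T} of points of X such that (a) for every ω ∈ T, f_{ω₁}∘⋯∘f_{ω_n}(x) → x_ω as n → ∞, and (b) for every s ≥ 1, sup{ ρ(x_ω, x_{ω′}) : ω, ω′ ∈ T, ω_{[1,s]} = ω′_{[1,s]} } ≤ 2·(1+c)·c^{−1}·Σ_{k=s+1}^{∞} (max_{i∈I_k} ρ(x, z_i))·c^k.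 -/
/-- `seqComp f ω n = f_{ω₁} ∘ ⋯ ∘ f_{ω_n}` (with `ω` indexed from `0`). -/
def seqComp {X I : Type*} (f : I → X → X) (ω : ℕ → I) : ℕ → X → X
  | 0 => id
  | n + 1 => seqComp f ω n ∘ f (ω n)

/-- `posMax T z x n = max_{i ∈ I_{n+1}} ρ(x, z_i)`, where `I_{n+1}` is the set of letters
occurring at (0-based) position `n` in elements of the tree `T`. -/
noncomputable def posMax {X I : Type*} [MetricSpace X]
    (T : Set (ℕ → I)) (z : I → X) (x : X) (n : ℕ) : ℝ :=
  sSup ((fun i => dist x (z i)) '' ((fun ω : ℕ → I => ω n) '' T))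

lemma seqComp_lipschitz {X I : Type*} [MetricSpace X] {c : ℝ}
    (f : I → X → X) (hf : ∀ i, ∀ u v : X, dist (f i u) (f i v) ≤ c * dist u v)
    (hc0 : 0 ≤ c) (ω : ℕ → I) :
    ∀ n, ∀ u v : X, dist (seqComp f ω n u) (seqComp f ω n v) ≤ c ^ n * dist u v := by
  intro n
  induction n with
  | zero => intro u v; simp [seqComp]
  | succ n ih =>
    intro u v
    calc dist (seqComp f ω n (f (ω n) u)) (seqComp f ω n (f (ω n) v))
        ≤ c ^ n * dist (f (ω n) u) (f (ω n) v) := ih _ _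
      _ ≤ c ^ n * (c * dist u v) := by
          exact mul_le_mul_of_nonneg_left (hf _ _ _) (pow_nonneg hc0 n)
      _ = c ^ (n + 1) * dist u v := by ring

lemma seqComp_congr {X I : Type*} (f : I → X → X) (ω ω' : ℕ → I) :
    ∀ s, (∀ k < s, ω k = ω' k) → ∀ u : X, seqComp f ω s u = seqComp f ω' s u := by
  intro s
  induction s with
  | zero => intro _ u; rfl
  | succ s ih =>
    intro h u
    show seqComp f ω s (f (ω s) u) = seqComp f ω' s (f (ω' s) u)
    rw [h s (Nat.lt_succ_self s), ih (fun k hk => h k (hk.trans (Nat.lt_succ_self s))) _]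

/-- For a general IFS `({f_i}, T)` with the summability condition
`∑_{n≥1} (max_{i∈I_n} ρ(x,z_i))·c^n < ∞`, there is a family `{x_ω}_{ω∈T}` such that
`f_{ω₁}∘⋯∘f_{ω_n}(x) → x_ω`, and for every `s ≥ 1`, any `ω, ω'` agreeing on their first
`s` letters satisfy `ρ(x_ω, x_{ω'}) ≤ 2(1+c)c⁻¹ ∑_{k=s+1}^∞ (max_{i∈I_k} ρ(x,z_i)) c^k`. -/
theorem stmt11 {X I : Type*} [MetricSpace X] [CompleteSpace X]
    [Countable I] [TopologicalSpace I] [DiscreteTopology I]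
    (c : ℝ) (hc0 : 0 < c) (hc1 : c < 1)
    (T : Set (ℕ → I)) (hTne : T.Nonempty) (hTc : IsCompact T)
    (f : I → X → X) (hf : ∀ i, ∀ u v : X, dist (f i u) (f i v) ≤ c * dist u v)
    (z : I → X) (hz : ∀ i, f i (z i) = z i)
    (x : X) (hsum : Summable fun n : ℕ => posMax T z x n * c ^ (n + 1)) :
    ∃ p : (ℕ → I) → X,
      (∀ ω ∈ T, Filter.Tendsto (fun n => seqComp f ω n x) Filter.atTop (nhds (p ω))) ∧
      (∀ s : ℕ, 1 ≤ s → ∀ ω ∈ T, ∀ ω' ∈ T, (∀ k < s, ω k = ω' k) →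
        dist (p ω) (p ω') ≤
          2 * (1 + c) * c⁻¹ * ∑' k : ℕ, posMax T z x (s + k) * c ^ (s + k + 1)) := by
  have hXne : Nonempty X := ⟨x⟩
  -- the summable dominating sequence
  set d : ℕ → ℝ := fun n => (1 + c) * c⁻¹ * (posMax T z x n * c ^ (n + 1)) with hd_def
  have hd_summable : Summable d := hsum.mul_left _
  -- the step bound
  have hstep : ∀ ω ∈ T, ∀ n : ℕ,
      dist (seqComp f ω n x) (seqComp f ω (n + 1) x) ≤ d n := by
    intro ω hω n
    have hmem : dist x (z (ω n)) ∈
        (fun i => dist x (z i)) '' ((fun ω : ℕ → I => ω n) '' T) :=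
      ⟨ω n, ⟨ω, hω, rfl⟩, rfl⟩
    have hfin : ((fun i => dist x (z i)) '' ((fun ω : ℕ → I => ω n) '' T)).Finite :=
      (((hTc.image (continuous_apply n)).finite_of_discrete).image _)
    have hle : dist x (z (ω n)) ≤ posMax T z x n := le_csSup hfin.bddAbove hmem
    have h1 : dist x (f (ω n) x) ≤ (1 + c) * posMax T z x n := by
      calc dist x (f (ω n) x)
          ≤ dist x (z (ω n)) + dist (z (ω n)) (f (ω n) x) := dist_triangle _ _ _
        _ = dist x (z (ω n)) + dist (f (ω n) (z (ω n))) (f (ω n) x) := by rw [hz]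
        _ ≤ dist x (z (ω n)) + c * dist (z (ω n)) x := by
            exact add_le_add (le_refl _) (hf _ _ _)
        _ = dist x (z (ω n)) + c * dist x (z (ω n)) := by rw [dist_comm x]
        _ = (1 + c) * dist x (z (ω n)) := by ring
        _ ≤ (1 + c) * posMax T z x n := by
            exact mul_le_mul_of_nonneg_left hle (by linarith)
    have h2 : dist (seqComp f ω n x) (seqComp f ω (n + 1) x)
        ≤ c ^ n * dist x (f (ω n) x) :=
      seqComp_lipschitz f hf hc0.le ω n x (f (ω n) x)
    have hpm : 0 ≤ dist x (f (ω n) x) := dist_nonneg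
    calc dist (seqComp f ω n x) (seqComp f ω (n + 1) x)
        ≤ c ^ n * dist x (f (ω n) x) := h2
      _ ≤ c ^ n * ((1 + c) * posMax T z x n) := by
          exact mul_le_mul_of_nonneg_left h1 (pow_nonneg hc0.le n)
      _ = d n := by
          rw [hd_def]; field_simp; ring
  -- definition of the limits
  set p : (ℕ → I) → X := fun ω => Filter.limUnder Filter.atTop (fun n => seqComp f ω n x) with hp_def
  have htendsto : ∀ ω ∈ T,
      Filter.Tendsto (fun n => seqComp f ω n x) Filter.atTop (nhds (p ω)) := by
    intro ω hω
    exact (cauchySeq_of_dist_le_of_summable d (hstep ω hω) hd_summable).tendsto_limUnder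
  refine ⟨p, htendsto, ?_⟩
  intro s hs ω hω ω' hω' hagree
  have htail : ∀ ψ ∈ T, dist (seqComp f ψ s x) (p ψ) ≤ ∑' m, d (s + m) := fun ψ hψ =>
    dist_le_tsum_of_dist_le_of_tendsto d (hstep ψ hψ) hd_summable (htendsto ψ hψ) s
  have heq : seqComp f ω s x = seqComp f ω' s x := seqComp_congr f ω ω' s hagree x
  have htsum : ∑' m, d (s + m)
      = (1 + c) * c⁻¹ * ∑' k : ℕ, posMax T z x (s + k) * c ^ (s + k + 1) := by
    rw [hd_def]
    exact tsum_mul_left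
  calc dist (p ω) (p ω')
      ≤ dist (p ω) (seqComp f ω s x) + dist (seqComp f ω' s x) (p ω') := by
        rw [heq]; exact dist_triangle _ _ _
    _ ≤ ∑' m, d (s + m) + ∑' m, d (s + m) := by
        refine add_le_add ?_ (htail ω' hω')
        rw [dist_comm]; exact htail ω hω
    _ = 2 * (1 + c) * c⁻¹ * ∑' k : ℕ, posMax T z x (s + k) * c ^ (s + k + 1) := by
        rw [htsum]; ring
end

section
/- Let ({f_i}_{i∈I}, T) be a general IFS with uniform contraction constant c ∈ (0,1) on a complete metric space (X,ρ), z_i the unique fixed point of f_i, and suppose there exists x ∈ X with α := limsup_{n→∞} (max_{i∈I_n} ρ(x, z_i))^{1/n} < 1/c. Then for every r with c ≤ r < 1 and α·c < r: (i) ⋃_{ω′ ∈ T_ω^{[1,n]}} f_{ω′}(π(T_{ωω′})) = π(T_ω) for every finite prefix word ω of T and n ≥ 1; (ii) for each nonempty compact A ⊆ X the quantity (c/r)^{|ω|+1}·ρ_H(A, π(T_ω)) is bounded over all finite prefix words ω of T; the family {π(T_ω)} is the unique family of nonempty compact sets with properties (i) and (ii); and for every nonempty compact A ⊆ X and every finite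 prefix word ω of T, the sets ⋃_{ω′ ∈ T_ω^{[1,n]}} f_{ω′}(A) converge to π(T_ω) in the Hausdorff distance exponentially fast with rate r as n → ∞ (i.e. the Hausdorff distance is bounded by a constant times r^n). -/
/-- `wcat a w σ` is the concatenation of the finite word consisting of the first `a`
letters of `w` with the infinite word `σ`. -/
def wcat {I : Type*} (a : ℕ) (w σ : ℕ → I) : ℕ → I :=
  fun k => if k < a then w k else σ (k - a)

/-- `Tsub T a w` is the conditioned subtree `T_ω` for the finite word `ω` consisting of
the first `a` letters of `w`. -/
def Tsub {I : Type*} (T : Set (ℕ → I)) (a : ℕ) (w : ℕ → I) : Set (ℕ → I) :=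
  {τ | wcat a w τ ∈ T}

/-- `IsPrefixWord T a w` : the first `a` letters of `w` form an initial word of some
element of `T`. -/
def IsPrefixWord {I : Type*} (T : Set (ℕ → I)) (a : ℕ) (w : ℕ → I) : Prop :=
  ∃ τ ∈ T, ∀ k < a, τ k = w k

/-- `bX T z x c a = b_x(a+1) = ∑_{k ≥ a+1} (max_{i∈I_k} ρ(x,z_i))·c^k` (1-based `k`). -/
noncomputable def bX {X I : Type*} [MetricSpace X]
    (T : Set (ℕ → I)) (z : I → X) (x : X) (c : ℝ) (a : ℕ) : ℝ :=
  ∑' k : ℕ, posMax T z x (a + k) * c ^ (a + 1 + k)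


namespace Stmt17Aux

theorem seqComp_congr {X I : Type*} (f : I → X → X) {ω ω' : ℕ → I} {n : ℕ}
    (h : ∀ k < n, ω k = ω' k) : seqComp f ω n = seqComp f ω' n := by
  induction n with
  | zero => rfl
  | succ n ih =>
    show seqComp f ω n ∘ f (ω n) = seqComp f ω' n ∘ f (ω' n)
    rw [ih (fun k hk => h k (hk.trans (Nat.lt_succ_self n))), h n (Nat.lt_succ_self n)]

theorem seqComp_dist {X I : Type*} [MetricSpace X] {c : ℝ} (hc0 : 0 ≤ c)
    {f : I → X → X} (hf : ∀ i, ∀ u v : X, dist (f i u) (f i v) ≤ c * dist u v)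
    (ω : ℕ → I) (n : ℕ) (u v : X) :
    dist (seqComp f ω n u) (seqComp f ω n v) ≤ c ^ n * dist u v := by
  induction n generalizing u v with
  | zero => simp [seqComp]
  | succ n ih =>
    calc dist (seqComp f ω (n+1) u) (seqComp f ω (n+1) v)
        = dist (seqComp f ω n (f (ω n) u)) (seqComp f ω n (f (ω n) v)) := rfl
      _ ≤ c ^ n * dist (f (ω n) u) (f (ω n) v) := ih _ _
      _ ≤ c ^ n * (c * dist u v) := by
          exact mul_le_mul_of_nonneg_left (hf _ _ _) (pow_nonneg hc0 n)
      _ = c ^ (n+1) * dist u v := by ring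

theorem seqComp_add {X I : Type*} (f : I → X → X) (ω : ℕ → I) (n m : ℕ) :
    seqComp f ω (n + m) = seqComp f ω n ∘ seqComp f (fun k => ω (n + k)) m := by
  induction m with
  | zero => rfl
  | succ m ih =>
    show seqComp f ω (n + m) ∘ f (ω (n + m)) = _
    rw [ih]
    rfl

theorem wcat_wcat {I : Type*} (a n : ℕ) (w w' σ : ℕ → I) :
    wcat a w (wcat n w' σ) = wcat (a + n) (wcat a w w') σ := by
  funext k
  simp only [wcat]
  rcases lt_or_ge k a with h | h
  · simp [h, h.trans_le (Nat.le_add_right a n)]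
  · rcases lt_or_ge k (a + n) with h2 | h2
    · have h3 : k - a < n := by omega
      have h4 : ¬ k < a := not_lt.mpr h
      simp [h4, h2, h3, h]
    · have h3 : ¬ k - a < n := by omega
      have h4 : ¬ k < a := by omega
      have h5 : ¬ k < a + n := not_lt.mpr h2
      simp [h3, h4, h5]
      congr 1
      omega

theorem wcat_self {I : Type*} (n : ℕ) (τ σ : ℕ → I) (h : ∀ k < n, σ k = τ k) : wcat n σ (fun k => τ (n + k)) = τ := by
  funext k
  simp only [wcat]
  rcases lt_or_ge k n with hk | hk
  · simp [hk, h k hk]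
  · have : ¬ k < n := not_lt.mpr hk
    simp [this]
    congr 1
    omega

theorem seqComp_continuous {X I : Type*} [TopologicalSpace X] (f : I → X → X)
    (hf : ∀ i, Continuous (f i)) (ω : ℕ → I) (n : ℕ) : Continuous (seqComp f ω n) := by
  induction n with
  | zero => exact continuous_id
  | succ n ih => exact ih.comp (hf (ω n))

theorem seqComp_param_continuous {X I : Type*} [TopologicalSpace X]
    [TopologicalSpace I] [DiscreteTopology I]
    (f : I → X → X) (x : X) (n : ℕ) (i0 : I) :
    Continuous (fun ω : ℕ → I => seqComp f ω n x) := by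
  have hfac : (fun ω : ℕ → I => seqComp f ω n x) =
      (fun v : Fin n → I => seqComp f (fun k => if h : k < n then v ⟨k, h⟩ else i0) n x)
        ∘ (fun ω (k : Fin n) => ω k.1) := by
    funext ω
    exact congrFun (seqComp_congr f (fun k hk => by simp [hk])) x
  rw [hfac]
  exact continuous_of_discreteTopology.comp (continuous_pi fun k => continuous_apply k.1)

theorem geom_bound (r : ℝ) (h0 : 0 ≤ r) (h1 : r < 1) (m : ℕ) :
    ∑ i ∈ Finset.range m, r ^ i ≤ 1 / (1 - r) := by
  rw [geom_sum_eq (ne_of_lt h1)]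
  have h1r : 0 < 1 - r := by linarith
  have : (r ^ m - 1) / (r - 1) = (1 - r ^ m) / (1 - r) := by
    rw [← neg_div_neg_eq]; ring_nf
  rw [this]
  gcongr
  nlinarith [pow_nonneg h0 m]

end Stmt17Aux


/-- For a general IFS with
`α := limsup_n (max_{i∈I_n} ρ(x,z_i))^{1/n} < 1/c`, for every rate `r ∈ [c,1)` with
`α·c < r`: (i) the self-similarity relation holds; (ii) `(c/r)^{|ω|+1}·ρ_H(A, π(T_ω))` is
bounded over finite prefix words `ω`, for every nonempty compact `A`; the family
`{π(T_ω)}` is the unique family of nonempty compact sets with (i) and (ii); and the sets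
`⋃_{ω' ∈ T_ω^{[1,n]}} f_{ω'}(A)` converge to `π(T_ω)` in the Hausdorff distance
exponentially fast with rate `r`. -/
theorem stmt17 {X I : Type*} [MetricSpace X] [CompleteSpace X]
    [Countable I] [TopologicalSpace I] [DiscreteTopology I]
    (c : ℝ) (hc0 : 0 < c) (hc1 : c < 1)
    (T : Set (ℕ → I)) (hTne : T.Nonempty) (hTc : IsCompact T)
    (f : I → X → X) (hf : ∀ i, ∀ u v : X, dist (f i u) (f i v) ≤ c * dist u v)
    (z : I → X) (hz : ∀ i, f i (z i) = z i)
    (x : X)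
    (hα : Filter.limsup
        (fun n : ℕ => (ENNReal.ofReal (posMax T z x n)) ^ (1 / (n + 1 : ℝ))) Filter.atTop
      < ENNReal.ofReal (1 / c))
    (π : (ℕ → I) → X)
    (hπ : ∀ (a : ℕ) (w τ : ℕ → I), wcat a w τ ∈ T →
      Filter.Tendsto (fun n => seqComp f τ n x) Filter.atTop (nhds (π τ))) :
    ∀ r : ℝ, c ≤ r → r < 1 →
      (Filter.limsup
          (fun n : ℕ => (ENNReal.ofReal (posMax T z x n)) ^ (1 / (n + 1 : ℝ))) Filter.atTop)
          * ENNReal.ofReal c < ENNReal.ofReal r →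
      ((∀ (a : ℕ) (w : ℕ → I), IsPrefixWord T a w → ∀ n : ℕ, 1 ≤ n →
          (⋃ w' : ℕ → I, ⋃ (_ : IsPrefixWord (Tsub T a w) n w'),
            seqComp f w' n '' (π '' Tsub T (a + n) (wcat a w w'))) = π '' Tsub T a w) ∧
       (∀ A : Set X, A.Nonempty → IsCompact A → ∃ B : ℝ,
          ∀ (a : ℕ) (w : ℕ → I), IsPrefixWord T a w →
            (c / r) ^ (a + 1) * Metric.hausdorffDist A (π '' Tsub T a w) ≤ B)) ∧
      (∀ K : ℕ → (ℕ → I) → Set X,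
        (∀ (a : ℕ) (w : ℕ → I), IsPrefixWord T a w →
          (K a w).Nonempty ∧ IsCompact (K a w)) →
        (∀ (a : ℕ) (w : ℕ → I), IsPrefixWord T a w → ∀ n : ℕ, 1 ≤ n →
          (⋃ w' : ℕ → I, ⋃ (_ : IsPrefixWord (Tsub T a w) n w'),
            seqComp f w' n '' K (a + n) (wcat a w w')) = K a w) →
        (∀ A : Set X, A.Nonempty → IsCompact A → ∃ B : ℝ,
          ∀ (a : ℕ) (w : ℕ → I), IsPrefixWord T a w →
            (c / r) ^ (a + 1) * Metric.hausdorffDist A (K a w) ≤ B) →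
        ∀ (a : ℕ) (w : ℕ → I), IsPrefixWord T a w → K a w = π '' Tsub T a w) ∧
      (∀ A : Set X, A.Nonempty → IsCompact A →
        ∀ (a : ℕ) (w : ℕ → I), IsPrefixWord T a w →
          ∃ C : ℝ, ∀ n : ℕ, 1 ≤ n →
            Metric.hausdorffDist
              (⋃ w' : ℕ → I, ⋃ (_ : IsPrefixWord (Tsub T a w) n w'), seqComp f w' n '' A)
              (π '' Tsub T a w) ≤ C * r ^ n) := by
  clear hα
  intro r hcr hr1 hrc
  have hr0 : 0 < r := lt_of_lt_of_le hc0 hcr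
  have hrc0 : 0 < r / c := div_pos hr0 hc0
  have hcr0 : 0 < c / r := div_pos hc0 hr0
  have hcr1 : c / r ≤ 1 := div_le_one_of_le₀ hcr hr0.le
  set M : ℕ → ℝ := posMax T z x with hMdef
  -- finiteness of position sets and basic facts about `M`
  have hposfin : ∀ n : ℕ, ((fun ω : ℕ → I => ω n) '' T).Finite := fun n =>
    (hTc.image (continuous_apply n)).finite
      (IsDiscrete.of_nhdsWithin fun y _ => nhdsWithin_le_nhds.trans (by rw [nhds_discrete]))
  have hMnonneg : ∀ n, 0 ≤ M n := by
    intro n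
    apply Real.sSup_nonneg
    rintro _ ⟨i, _, rfl⟩
    exact dist_nonneg
  have hMmem : ∀ (n : ℕ) (τ : ℕ → I), τ ∈ T → dist x (z (τ n)) ≤ M n := by
    intro n τ hτ
    exact le_csSup ((hposfin n).image _).bddAbove ⟨τ n, ⟨τ, hτ, rfl⟩, rfl⟩
  -- the constant `D`
  have hlim : Filter.limsup (fun n : ℕ => (ENNReal.ofReal (M n)) ^ (1 / (n + 1 : ℝ)))
      Filter.atTop < ENNReal.ofReal (r / c) := by
    have hne0 : (ENNReal.ofReal c) ≠ 0 := by
      simp [ENNReal.ofReal_eq_zero, not_le, hc0]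
    rw [ENNReal.ofReal_div_of_pos hc0,
      ENNReal.lt_div_iff_mul_lt (Or.inl hne0) (Or.inl ENNReal.ofReal_ne_top)]
    exact hrc
  have hev := Filter.eventually_lt_of_limsup_lt hlim
  obtain ⟨N, hN⟩ := Filter.eventually_atTop.mp hev
  have hMle : ∀ n, N ≤ n → M n ≤ (r / c) ^ (n + 1) := by
    intro n hn
    have h := hN n hn
    have h3 := ENNReal.rpow_le_rpow h.le (by positivity : (0:ℝ) ≤ (n : ℝ) + 1)
    rw [← ENNReal.rpow_mul] at h3
    have hone : (1 / ((n : ℝ) + 1)) * ((n : ℝ) + 1) = 1 := by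
      field_simp
    rw [hone, ENNReal.rpow_one] at h3
    have h4 : (ENNReal.ofReal (r / c)) ^ ((n : ℝ) + 1)
        = ENNReal.ofReal ((r / c) ^ (n + 1)) := by
      rw [ENNReal.ofReal_pow hrc0.le, ← ENNReal.rpow_natCast]
      norm_num
    rw [h4] at h3
    exact (ENNReal.ofReal_le_ofReal_iff (by positivity)).mp h3
  have hsum0 : ∀ k : ℕ, 0 ≤ M k * (c / r) ^ (k + 1) := fun k =>
    mul_nonneg (hMnonneg k) (pow_nonneg hcr0.le _)
  set D : ℝ := 1 + ∑ k ∈ Finset.range N, M k * (c / r) ^ (k + 1) with hDdef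
  have hD1 : 1 ≤ D := le_add_of_nonneg_right (Finset.sum_nonneg fun k _ => hsum0 k)
  have hD0 : 0 ≤ D := by linarith
  have honep : ∀ m : ℕ, (c / r) ^ m * (r / c) ^ m = 1 := by
    intro m
    rw [← mul_pow, show c / r * (r / c) = 1 by field_simp]
    exact one_pow m
  have hD : ∀ n, M n ≤ D * (r / c) ^ (n + 1) := by
    intro n
    have hrcpow : 0 < (r / c) ^ (n + 1) := pow_pos hrc0 _
    rcases lt_or_ge n N with h | h
    · have h5 : M n * (c / r) ^ (n + 1) ≤ D := by
        have := Finset.single_le_sum (f := fun k => M k * (c / r) ^ (k + 1))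
          (fun k _ => hsum0 k) (Finset.mem_range.mpr h)
        linarith
      calc M n = (M n * (c / r) ^ (n + 1)) * (r / c) ^ (n + 1) := by
            rw [mul_assoc, honep (n + 1), mul_one]
        _ ≤ D * (r / c) ^ (n + 1) := mul_le_mul_of_nonneg_right h5 hrcpow.le
    · exact (hMle n h).trans (le_mul_of_one_le_left hrcpow.le hD1)
  -- constants
  set E : ℝ := 2 * D / (1 - r) with hEdef
  have h1r : 0 < 1 - r := by linarith
  have hE0 : 0 ≤ E := by positivity
  have hpowid : ∀ (b k : ℕ), c ^ k * (r / c) ^ (b + k + 1) = (r / c) ^ (b + 1) * r ^ k := by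
    intro b k
    have hcrr : c * (r / c) = r := by field_simp
    calc c ^ k * (r / c) ^ (b + k + 1) = (r / c) ^ (b + 1) * (c * (r / c)) ^ k := by
          rw [mul_pow]; ring
      _ = (r / c) ^ (b + 1) * r ^ k := by rw [hcrr]
  -- the key estimate
  have hshifttend : ∀ (a : ℕ) (w τ : ℕ → I), wcat a w τ ∈ T → ∀ n : ℕ,
      Filter.Tendsto (fun m => seqComp f τ (n + m) x) Filter.atTop (nhds (π τ)) := by
    intro a w τ hmem n
    exact Filter.Tendsto.congr (fun m => by simp [Function.comp_apply, Nat.add_comm n m])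
      ((hπ a w τ hmem).comp (Filter.tendsto_add_atTop_nat n))
  have key : ∀ (a : ℕ) (w τ : ℕ → I), wcat a w τ ∈ T → ∀ n : ℕ,
      dist (seqComp f τ n x) (π τ) ≤ E * (r / c) ^ (a + 1) * r ^ n := by
    intro a w τ hmem n
    have hτk : ∀ k, dist x (z (τ k)) ≤ M (a + k) := by
      intro k
      have h := hMmem (a + k) _ hmem
      have he : wcat a w τ (a + k) = τ k := by
        simp only [wcat]
        have : ¬ a + k < a := by omega
        simp [this]
      rwa [he] at h
    have hstep : ∀ k, dist (seqComp f τ k x) (seqComp f τ (k + 1) x)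
        ≤ 2 * D * ((r / c) ^ (a + 1) * r ^ k) := by
      intro k
      have h2 : dist x (f (τ k) x) ≤ 2 * M (a + k) := by
        have h3 := hτk k
        calc dist x (f (τ k) x)
            ≤ dist x (z (τ k)) + dist (z (τ k)) (f (τ k) x) := dist_triangle _ _ _
          _ = dist x (z (τ k)) + dist (f (τ k) (z (τ k))) (f (τ k) x) := by rw [hz]
          _ ≤ dist x (z (τ k)) + c * dist (z (τ k)) x := by
              have := hf (τ k) (z (τ k)) x
              linarith
          _ ≤ M (a + k) + 1 * M (a + k) := by
              rw [dist_comm (z (τ k)) x]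
              have hc1' : c * dist x (z (τ k)) ≤ 1 * dist x (z (τ k)) :=
                mul_le_mul_of_nonneg_right hc1.le dist_nonneg
              have : 1 * dist x (z (τ k)) ≤ 1 * M (a + k) := by linarith
              linarith
          _ = 2 * M (a + k) := by ring
      calc dist (seqComp f τ k x) (seqComp f τ (k + 1) x)
          = dist (seqComp f τ k x) (seqComp f τ k (f (τ k) x)) := rfl
        _ ≤ c ^ k * dist x (f (τ k) x) := Stmt17Aux.seqComp_dist hc0.le hf τ k _ _
        _ ≤ c ^ k * (2 * M (a + k)) :=
            mul_le_mul_of_nonneg_left h2 (pow_nonneg hc0.le k)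
        _ ≤ c ^ k * (2 * (D * (r / c) ^ (a + k + 1))) :=
            mul_le_mul_of_nonneg_left (by linarith [hD (a + k)]) (pow_nonneg hc0.le k)
        _ = 2 * D * ((r / c) ^ (a + 1) * r ^ k) := by
            linear_combination (2 * D) * hpowid a k
    have hcauchy : ∀ m : ℕ, dist (seqComp f τ n x) (seqComp f τ (n + m) x)
        ≤ E * (r / c) ^ (a + 1) * r ^ n := by
      intro m
      have hsum : dist (seqComp f τ n x) (seqComp f τ (n + m) x)
          ≤ ∑ i ∈ Finset.range m, dist (seqComp f τ (n + i) x) (seqComp f τ (n + i + 1) x) := by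
        have h := dist_le_range_sum_dist (fun i => seqComp f τ (n + i) x) m
        simpa [add_assoc] using h
      have h2 : ∑ i ∈ Finset.range m, dist (seqComp f τ (n + i) x) (seqComp f τ (n + i + 1) x)
          ≤ ∑ i ∈ Finset.range m, 2 * D * ((r / c) ^ (a + 1) * r ^ (n + i)) :=
        Finset.sum_le_sum fun i _ => hstep (n + i)
      have h3 : ∑ i ∈ Finset.range m, 2 * D * ((r / c) ^ (a + 1) * r ^ (n + i))
          = 2 * D * (r / c) ^ (a + 1) * r ^ n * ∑ i ∈ Finset.range m, r ^ i := by
        rw [Finset.mul_sum]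
        apply Finset.sum_congr rfl
        intro i _
        rw [pow_add]
        ring
      have h4 : (2 : ℝ) * D * (r / c) ^ (a + 1) * r ^ n * ∑ i ∈ Finset.range m, r ^ i
          ≤ 2 * D * (r / c) ^ (a + 1) * r ^ n * (1 / (1 - r)) := by
        apply mul_le_mul_of_nonneg_left (Stmt17Aux.geom_bound r hr0.le hr1 m)
        positivity
      have h5 : (2 : ℝ) * D * (r / c) ^ (a + 1) * r ^ n * (1 / (1 - r))
          = E * (r / c) ^ (a + 1) * r ^ n := by
        rw [hEdef]
        field_simp
      linarith
    exact le_of_tendsto (Filter.Tendsto.dist tendsto_const_nhds (hshifttend a w τ hmem n))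
      (Filter.Eventually.of_forall hcauchy)
  have keyx : ∀ (a : ℕ) (w τ : ℕ → I), wcat a w τ ∈ T →
      dist x (π τ) ≤ E * (r / c) ^ (a + 1) := by
    intro a w τ h
    have h0 := key a w τ h 0
    simpa [seqComp] using h0
  -- shift membership
  have hshift : ∀ (a n : ℕ) (w τ : ℕ → I), wcat a w τ ∈ T →
      (fun k => τ (n + k)) ∈ Tsub T (a + n) (wcat a w τ) := by
    intro a n w τ hmem
    show wcat (a + n) (wcat a w τ) (fun k => τ (n + k)) ∈ T
    rw [← Stmt17Aux.wcat_wcat]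
    rw [Stmt17Aux.wcat_self n τ τ (fun k _ => rfl)]
    exact hmem
  -- decomposition of π
  have hdecomp : ∀ (a : ℕ) (w τ : ℕ → I), wcat a w τ ∈ T → ∀ n : ℕ,
      π τ = seqComp f τ n (π (fun k => τ (n + k))) := by
    intro a w τ hmem n
    have hσmem : wcat (a + n) (wcat a w τ) (fun k => τ (n + k)) ∈ T := hshift a n w τ hmem
    have h1 := hπ (a + n) (wcat a w τ) _ hσmem
    have hcont : Continuous (seqComp f τ n) :=
      Stmt17Aux.seqComp_continuous f
        (fun i => (LipschitzWith.of_dist_le_mul (K := ⟨c, hc0.le⟩)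
          (fun u v => by exact hf i u v)).continuous) τ n
    have h2 : Filter.Tendsto (fun m => seqComp f τ (n + m) x) Filter.atTop
        (nhds (seqComp f τ n (π (fun k => τ (n + k))))) := by
      refine Filter.Tendsto.congr (fun m => ?_) ((hcont.tendsto _).comp h1)
      exact (congrFun (Stmt17Aux.seqComp_add f τ n m) x).symm
    exact tendsto_nhds_unique (hshifttend a w τ hmem n) h2
  -- relating conditioned subtrees
  have hsub : ∀ (a n : ℕ) (w w' σ : ℕ → I), σ ∈ Tsub T (a + n) (wcat a w w') →
      wcat n w' σ ∈ Tsub T a w := by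
    intro a n w w' σ hσ
    show wcat a w (wcat n w' σ) ∈ T
    rw [Stmt17Aux.wcat_wcat]
    exact hσ
  have hsub2 : ∀ (a n : ℕ) (w w' σ : ℕ → I), σ ∈ Tsub T (a + n) (wcat a w w') →
      π (wcat n w' σ) = seqComp f w' n (π σ) := by
    intro a n w w' σ hσ
    have hmem : wcat a w (wcat n w' σ) ∈ T := hsub a n w w' σ hσ
    have h1 := hdecomp a w (wcat n w' σ) hmem n
    have h2 : (fun k => wcat n w' σ (n + k)) = σ := by
      funext k
      simp only [wcat]
      have : ¬ n + k < n := by omega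
      simp [this]
    have h3 : seqComp f (wcat n w' σ) n = seqComp f w' n := by
      apply Stmt17Aux.seqComp_congr
      intro k hk
      simp [wcat, hk]
    rw [h1, h2, h3]
  have hsub3 : ∀ (a n : ℕ) (w w' : ℕ → I), IsPrefixWord (Tsub T a w) n w' →
      (Tsub T (a + n) (wcat a w w')).Nonempty := by
    intro a n w w' hw'
    obtain ⟨τ, hτ, hag⟩ := hw'
    refine ⟨fun k => τ (n + k), ?_⟩
    show wcat (a + n) (wcat a w w') (fun k => τ (n + k)) ∈ T
    rw [← Stmt17Aux.wcat_wcat, Stmt17Aux.wcat_self n τ w' (fun k hk => (hag k hk).symm)]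
    exact hτ
  have hsub4 : ∀ (a n : ℕ) (w w' : ℕ → I), IsPrefixWord (Tsub T a w) n w' →
      IsPrefixWord T (a + n) (wcat a w w') := by
    intro a n w w' hw'
    obtain ⟨τ, hτ, hag⟩ := hw'
    refine ⟨wcat a w τ, hτ, ?_⟩
    intro k hk
    simp only [wcat]
    rcases lt_or_ge k a with h | h
    · simp [h]
    · have h2 : ¬ k < a := not_lt.mpr h
      simp only [h2, if_false]
      exact hag (k - a) (by omega)
  have hsubne : ∀ (a : ℕ) (w : ℕ → I), IsPrefixWord T a w → (Tsub T a w).Nonempty := by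
    intro a w hw
    obtain ⟨τ, hτ, hag⟩ := hw
    refine ⟨fun k => τ (a + k), ?_⟩
    show wcat a w (fun k => τ (a + k)) ∈ T
    rw [Stmt17Aux.wcat_self a τ w (fun k hk => (hag k hk).symm)]
    exact hτ
  -- the self-similarity identity (part i, without needing n ≥ 1)
  have selfsim : ∀ (a : ℕ) (w : ℕ → I) (n : ℕ),
      (⋃ w' : ℕ → I, ⋃ (_ : IsPrefixWord (Tsub T a w) n w'),
        seqComp f w' n '' (π '' Tsub T (a + n) (wcat a w w'))) = π '' Tsub T a w := by
    intro a w n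
    apply Set.Subset.antisymm
    · rintro p hp
      simp only [Set.mem_iUnion] at hp
      obtain ⟨w', _, q, ⟨σ, hσ, rfl⟩, rfl⟩ := hp
      exact ⟨wcat n w' σ, hsub a n w w' σ hσ, hsub2 a n w w' σ hσ⟩
    · rintro p ⟨τ, hτ, rfl⟩
      refine Set.mem_iUnion.mpr ⟨τ, Set.mem_iUnion.mpr ⟨⟨τ, hτ, fun k _ => rfl⟩, ?_⟩⟩
      exact ⟨π (fun k => τ (n + k)), ⟨_, hshift a n w τ hτ, rfl⟩, (hdecomp a w τ hτ n).symm⟩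
  -- compactness of π '' Tsub
  have hTsubc : ∀ (a : ℕ) (w : ℕ → I), IsCompact (Tsub T a w) := by
    intro a w
    have heq : Tsub T a w
        = (fun τ (k : ℕ) => τ (a + k)) '' (T ∩ {τ | ∀ k < a, τ k = w k}) := by
      apply Set.Subset.antisymm
      · intro σ hσ
        refine ⟨wcat a w σ, ⟨hσ, fun k hk => by simp [wcat, hk]⟩, ?_⟩
        funext k
        simp only [wcat]
        have : ¬ a + k < a := by omega
        simp [this]
      · rintro _ ⟨τ, ⟨hτ, hag⟩, rfl⟩
        show wcat a w (fun k => τ (a + k)) ∈ T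
        rw [Stmt17Aux.wcat_self a τ w (fun k hk => (hag k hk).symm)]
        exact hτ
    rw [heq]
    have hclosed : IsClosed {τ : ℕ → I | ∀ k < a, τ k = w k} := by
      have : {τ : ℕ → I | ∀ k < a, τ k = w k}
          = ⋂ (k : ℕ) (_ : k < a), (fun τ : ℕ → I => τ k) ⁻¹' {w k} := by
        ext τ; simp [Set.mem_iInter]
      rw [this]
      exact isClosed_iInter fun k => isClosed_iInter fun _ =>
        (isClosed_singleton).preimage (continuous_apply k)
    exact (hTc.inter_right hclosed).image (continuous_pi fun k => continuous_apply (a + k))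
  have hπcont : ∀ (a : ℕ) (w : ℕ → I), ContinuousOn π (Tsub T a w) := by
    intro a w
    have i0 : I := hTne.some 0
    apply TendstoUniformlyOn.continuousOn
      (F := fun (n : ℕ) (τ : ℕ → I) => seqComp f τ n x) (p := Filter.atTop)
    · rw [Metric.tendstoUniformlyOn_iff]
      intro ε hε
      have htend : Filter.Tendsto (fun n : ℕ => E * (r / c) ^ (a + 1) * r ^ n)
          Filter.atTop (nhds 0) := by
        have := (tendsto_pow_atTop_nhds_zero_of_lt_one hr0.le hr1).const_mul
          (E * (r / c) ^ (a + 1))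
        simpa using this
      filter_upwards [htend.eventually (gt_mem_nhds hε)] with n hn τ hτ
      calc dist (π τ) (seqComp f τ n x) = dist (seqComp f τ n x) (π τ) := dist_comm _ _
        _ ≤ E * (r / c) ^ (a + 1) * r ^ n := key a w τ hτ n
        _ < ε := hn
    · refine Filter.Eventually.frequently (Filter.Eventually.of_forall fun n => ?_)
      exact (Stmt17Aux.seqComp_param_continuous f x n i0).continuousOn
  have hπcompact : ∀ (a : ℕ) (w : ℕ → I), IsCompact (π '' Tsub T a w) := fun a w =>
    (hTsubc a w).image_of_continuousOn (hπcont a w)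
  -- the central distance estimate used in (ii), (iii), uniqueness
  refine ⟨⟨fun a w _ n _ => selfsim a w n, ?_⟩, ?_, ?_⟩
  · -- part (ii)
    intro A hAne hAc
    obtain ⟨dA, hdA⟩ := hAc.isBounded.subset_closedBall x
    obtain ⟨q0, hq0⟩ := hAne
    have hdA0 : 0 ≤ dA := le_trans dist_nonneg (hdA hq0)
    refine ⟨dA + E, ?_⟩
    intro a w hpre
    obtain ⟨σ0, hσ0⟩ := hsubne a w hpre
    have hbd : Metric.hausdorffDist A (π '' Tsub T a w) ≤ dA + E * (r / c) ^ (a + 1) := by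
      apply Metric.hausdorffDist_le_of_mem_dist (by positivity)
      · intro q hq
        refine ⟨π σ0, ⟨σ0, hσ0, rfl⟩, ?_⟩
        calc dist q (π σ0) ≤ dist q x + dist x (π σ0) := dist_triangle _ _ _
          _ ≤ dA + E * (r / c) ^ (a + 1) := by
              have h1 : dist q x ≤ dA := hdA hq
              have h2 := keyx a w σ0 hσ0
              linarith
      · rintro _ ⟨τ, hτ, rfl⟩
        refine ⟨q0, hq0, ?_⟩
        calc dist (π τ) q0 ≤ dist (π τ) x + dist x q0 := dist_triangle _ _ _
          _ ≤ dA + E * (r / c) ^ (a + 1) := by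
              have h1 : dist (π τ) x ≤ E * (r / c) ^ (a + 1) := by
                rw [dist_comm]; exact keyx a w τ hτ
              have h2 : dist x q0 ≤ dA := by rw [dist_comm]; exact hdA hq0
              linarith
    have hpowle : (c / r) ^ (a + 1) ≤ 1 := pow_le_one₀ hcr0.le hcr1
    have hpownn : (0:ℝ) ≤ (c / r) ^ (a + 1) := pow_nonneg hcr0.le _
    calc (c / r) ^ (a + 1) * Metric.hausdorffDist A (π '' Tsub T a w)
        ≤ (c / r) ^ (a + 1) * (dA + E * (r / c) ^ (a + 1)) :=
          mul_le_mul_of_nonneg_left hbd hpownn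
      _ = (c / r) ^ (a + 1) * dA + E * ((c / r) ^ (a + 1) * (r / c) ^ (a + 1)) := by ring
      _ = (c / r) ^ (a + 1) * dA + E := by rw [honep (a + 1), mul_one]
      _ ≤ 1 * dA + E := by
          have := mul_le_mul_of_nonneg_right hpowle hdA0
          linarith
      _ = dA + E := by ring
  · -- uniqueness
    intro K hKnec hKself hKbound a w hpre
    obtain ⟨BK, hBK⟩ := hKbound {x} ⟨x, rfl⟩ isCompact_singleton
    have hBK0 : 0 ≤ BK :=
      le_trans (mul_nonneg (pow_nonneg hcr0.le _) Metric.hausdorffDist_nonneg)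
        (hBK a w hpre)
    have hKpt : ∀ (b : ℕ) (u : ℕ → I), IsPrefixWord T b u →
        ∀ y ∈ K b u, dist y x ≤ BK * (r / c) ^ (b + 1) := by
      intro b u hbu y hy
      obtain ⟨hne, hcpt⟩ := hKnec b u hbu
      have hfin : EMetric.hausdorffEdist ({x} : Set X) (K b u) ≠ ⊤ :=
        Metric.hausdorffEdist_ne_top_of_nonempty_of_bounded ⟨x, rfl⟩ hne
          Bornology.isBounded_singleton hcpt.isBounded
      have h1 : dist y x ≤ Metric.hausdorffDist ({x} : Set X) (K b u) := by
        have h2 := Metric.infDist_le_hausdorffDist_of_mem hy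
          (by rw [EMetric.hausdorffEdist_comm]; exact hfin)
        rw [Metric.infDist_singleton] at h2
        rw [Metric.hausdorffDist_comm]
        exact h2
      have h2 := hBK b u hbu
      have h3 : Metric.hausdorffDist ({x} : Set X) (K b u) ≤ BK * (r / c) ^ (b + 1) := by
        have hp : (0:ℝ) < (c / r) ^ (b + 1) := pow_pos hcr0 _
        have h4 : Metric.hausdorffDist ({x} : Set X) (K b u)
            = ((c / r) ^ (b + 1) * Metric.hausdorffDist ({x} : Set X) (K b u))
              * (r / c) ^ (b + 1) := by
          rw [mul_comm ((c / r) ^ (b + 1)) _, mul_assoc, honep (b + 1), mul_one]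
        rw [h4]
        exact mul_le_mul_of_nonneg_right h2 (pow_nonneg hrc0.le _)
      linarith
    have hest : ∀ n : ℕ,
        Metric.hausdorffDist (K a w) (π '' Tsub T a w)
          ≤ (BK + E) * (r / c) ^ (a + 1) * r ^ (n + 1) := by
      intro n
      apply Metric.hausdorffDist_le_of_mem_dist (by positivity)
      · intro p hp
        rw [← hKself a w hpre (n + 1) (Nat.le_add_left 1 n)] at hp
        simp only [Set.mem_iUnion] at hp
        obtain ⟨w', hw', q, hq, rfl⟩ := hp
        obtain ⟨σ, hσ⟩ := hsub3 a (n + 1) w w' hw'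
        refine ⟨π (wcat (n + 1) w' σ), ⟨_, hsub a (n + 1) w w' σ hσ, rfl⟩, ?_⟩
        have hq' : dist q x ≤ BK * (r / c) ^ (a + (n + 1) + 1) :=
          hKpt (a + (n + 1)) (wcat a w w') (hsub4 a (n + 1) w w' hw') q hq
        have hx' : dist x (π σ) ≤ E * (r / c) ^ (a + (n + 1) + 1) :=
          keyx (a + (n + 1)) (wcat a w w') σ hσ
        calc dist (seqComp f w' (n + 1) q) (π (wcat (n + 1) w' σ))
            = dist (seqComp f w' (n + 1) q) (seqComp f w' (n + 1) (π σ)) := by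
              rw [hsub2 a (n + 1) w w' σ hσ]
          _ ≤ c ^ (n + 1) * dist q (π σ) := Stmt17Aux.seqComp_dist hc0.le hf w' (n + 1) _ _
          _ ≤ c ^ (n + 1) * (dist q x + dist x (π σ)) :=
              mul_le_mul_of_nonneg_left (dist_triangle _ _ _) (pow_nonneg hc0.le _)
          _ ≤ c ^ (n + 1) * (BK * (r / c) ^ (a + (n + 1) + 1)
                + E * (r / c) ^ (a + (n + 1) + 1)) :=
              mul_le_mul_of_nonneg_left (by linarith) (pow_nonneg hc0.le _)
          _ = (BK + E) * (r / c) ^ (a + 1) * r ^ (n + 1) := by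
              linear_combination (BK + E) * hpowid a (n + 1)
      · rintro _ ⟨τ, hτ, rfl⟩
        have hτpre : IsPrefixWord T (a + (n + 1)) (wcat a w τ) :=
          ⟨wcat a w τ, hτ, fun k _ => rfl⟩
        obtain ⟨q, hq⟩ := (hKnec _ _ hτpre).1
        refine ⟨seqComp f τ (n + 1) q, ?_, ?_⟩
        · rw [← hKself a w hpre (n + 1) (Nat.le_add_left 1 n)]
          exact Set.mem_iUnion.mpr ⟨τ, Set.mem_iUnion.mpr
            ⟨⟨τ, hτ, fun k _ => rfl⟩, ⟨q, hq, rfl⟩⟩⟩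
        · have hσmem := hshift a (n + 1) w τ hτ
          have hx' : dist x (π (fun k => τ (n + 1 + k)))
              ≤ E * (r / c) ^ (a + (n + 1) + 1) :=
            keyx (a + (n + 1)) (wcat a w τ) _ hσmem
          have hq' : dist q x ≤ BK * (r / c) ^ (a + (n + 1) + 1) :=
            hKpt (a + (n + 1)) (wcat a w τ) hτpre q hq
          calc dist (π τ) (seqComp f τ (n + 1) q)
              = dist (seqComp f τ (n + 1) (π (fun k => τ (n + 1 + k))))
                  (seqComp f τ (n + 1) q) := by rw [← hdecomp a w τ hτ (n + 1)]
            _ ≤ c ^ (n + 1) * dist (π (fun k => τ (n + 1 + k))) q :=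
                Stmt17Aux.seqComp_dist hc0.le hf τ (n + 1) _ _
            _ ≤ c ^ (n + 1) * (dist (π (fun k => τ (n + 1 + k))) x + dist x q) :=
                mul_le_mul_of_nonneg_left (dist_triangle _ _ _) (pow_nonneg hc0.le _)
            _ ≤ c ^ (n + 1) * (E * (r / c) ^ (a + (n + 1) + 1)
                  + BK * (r / c) ^ (a + (n + 1) + 1)) := by
                have h5 : dist (π (fun k => τ (n + 1 + k))) x
                    ≤ E * (r / c) ^ (a + (n + 1) + 1) := by
                  rw [dist_comm]; exact hx'
                have h6 : dist x q ≤ BK * (r / c) ^ (a + (n + 1) + 1) := by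
                  rw [dist_comm]; exact hq'
                exact mul_le_mul_of_nonneg_left (by linarith) (pow_nonneg hc0.le _)
            _ = (BK + E) * (r / c) ^ (a + 1) * r ^ (n + 1) := by
                linear_combination (BK + E) * hpowid a (n + 1)
    have htend : Filter.Tendsto
        (fun n : ℕ => (BK + E) * (r / c) ^ (a + 1) * r ^ (n + 1)) Filter.atTop (nhds 0) := by
      have h1 : Filter.Tendsto (fun n : ℕ => r ^ (n + 1)) Filter.atTop (nhds 0) := by
        have := (tendsto_pow_atTop_nhds_zero_of_lt_one hr0.le hr1).comp
          (Filter.tendsto_add_atTop_nat 1)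
        exact this
      have := h1.const_mul ((BK + E) * (r / c) ^ (a + 1))
      simpa using this
    have h0 : Metric.hausdorffDist (K a w) (π '' Tsub T a w) ≤ 0 :=
      ge_of_tendsto' htend hest
    have hdz : Metric.hausdorffDist (K a w) (π '' Tsub T a w) = 0 :=
      le_antisymm h0 Metric.hausdorffDist_nonneg
    have hSne : (π '' Tsub T a w).Nonempty := (hsubne a w hpre).image π
    have hKane := (hKnec a w hpre).1
    have hne_top : EMetric.hausdorffEdist (K a w) (π '' Tsub T a w) ≠ ⊤ :=
      Metric.hausdorffEdist_ne_top_of_nonempty_of_bounded hKane hSne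
        (hKnec a w hpre).2.isBounded (hπcompact a w).isBounded
    have hez : EMetric.hausdorffEdist (K a w) (π '' Tsub T a w) = 0 := by
      have h' : (EMetric.hausdorffEdist (K a w) (π '' Tsub T a w)).toReal = 0 := hdz
      exact ((ENNReal.toReal_eq_zero_iff _).mp h').resolve_right hne_top
    have hcl := EMetric.hausdorffEdist_zero_iff_closure_eq_closure.mp hez
    calc K a w = closure (K a w) := ((hKnec a w hpre).2.isClosed.closure_eq).symm
      _ = closure (π '' Tsub T a w) := hcl
      _ = π '' Tsub T a w := (hπcompact a w).isClosed.closure_eq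
  · -- part (iii)
    intro A hAne hAc a w hpre
    obtain ⟨dA, hdA⟩ := hAc.isBounded.subset_closedBall x
    obtain ⟨q0, hq0⟩ := hAne
    have hdA0 : 0 ≤ dA := le_trans dist_nonneg (hdA hq0)
    refine ⟨dA + E * (r / c) ^ (a + 1), ?_⟩
    intro n _
    apply Metric.hausdorffDist_le_of_mem_dist (by positivity)
    · intro p hp
      simp only [Set.mem_iUnion] at hp
      obtain ⟨w', hw', q, hq, rfl⟩ := hp
      obtain ⟨σ, hσ⟩ := hsub3 a n w w' hw'
      refine ⟨π (wcat n w' σ), ⟨_, hsub a n w w' σ hσ, rfl⟩, ?_⟩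
      have hq' : dist q x ≤ dA := hdA hq
      have hx' : dist x (π σ) ≤ E * (r / c) ^ (a + n + 1) :=
        keyx (a + n) (wcat a w w') σ hσ
      calc dist (seqComp f w' n q) (π (wcat n w' σ))
          = dist (seqComp f w' n q) (seqComp f w' n (π σ)) := by
            rw [hsub2 a n w w' σ hσ]
        _ ≤ c ^ n * dist q (π σ) := Stmt17Aux.seqComp_dist hc0.le hf w' n _ _
        _ ≤ c ^ n * (dist q x + dist x (π σ)) :=
            mul_le_mul_of_nonneg_left (dist_triangle _ _ _) (pow_nonneg hc0.le _)
        _ ≤ c ^ n * (dA + E * (r / c) ^ (a + n + 1)) :=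
            mul_le_mul_of_nonneg_left (by linarith) (pow_nonneg hc0.le n)
        _ = c ^ n * dA + E * (c ^ n * (r / c) ^ (a + n + 1)) := by ring
        _ = c ^ n * dA + E * ((r / c) ^ (a + 1) * r ^ n) := by rw [hpowid a n]
        _ ≤ r ^ n * dA + E * ((r / c) ^ (a + 1) * r ^ n) := by
            have h7 : c ^ n ≤ r ^ n := pow_le_pow_left₀ hc0.le hcr n
            have h8 : c ^ n * dA ≤ r ^ n * dA :=
              mul_le_mul_of_nonneg_right h7 hdA0
            linarith
        _ = (dA + E * (r / c) ^ (a + 1)) * r ^ n := by ring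
    · rintro _ ⟨τ, hτ, rfl⟩
      refine ⟨seqComp f τ n q0, ?_, ?_⟩
      · exact Set.mem_iUnion.mpr ⟨τ, Set.mem_iUnion.mpr
          ⟨⟨τ, hτ, fun k _ => rfl⟩, ⟨q0, hq0, rfl⟩⟩⟩
      · have hσmem := hshift a n w τ hτ
        have hx' : dist (π (fun k => τ (n + k))) x ≤ E * (r / c) ^ (a + n + 1) := by
          rw [dist_comm]; exact keyx (a + n) (wcat a w τ) _ hσmem
        have hq' : dist x q0 ≤ dA := by rw [dist_comm]; exact hdA hq0
        calc dist (π τ) (seqComp f τ n q0)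
            = dist (seqComp f τ n (π (fun k => τ (n + k)))) (seqComp f τ n q0) := by
              rw [← hdecomp a w τ hτ n]
          _ ≤ c ^ n * dist (π (fun k => τ (n + k))) q0 :=
              Stmt17Aux.seqComp_dist hc0.le hf τ n _ _
          _ ≤ c ^ n * (dist (π (fun k => τ (n + k))) x + dist x q0) :=
              mul_le_mul_of_nonneg_left (dist_triangle _ _ _) (pow_nonneg hc0.le _)
          _ ≤ c ^ n * dA + E * ((r / c) ^ (a + 1) * r ^ n) := by
              have hck : (0:ℝ) ≤ c ^ n := pow_nonneg hc0.le n
              nlinarith [hpowid a n]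
          _ ≤ (dA + E * (r / c) ^ (a + 1)) * r ^ n := by
              have h7 : c ^ n ≤ r ^ n := pow_le_pow_left₀ hc0.le hcr n
              have h8 : c ^ n * dA ≤ r ^ n * dA :=
                mul_le_mul_of_nonneg_right h7 hdA0
              nlinarith
end
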